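/- arXiv:0810.0845 — 9 statements merged into one kernel-verified Lean document; each statement's English description precedes it below -/
import Mathlib

section
/- Let M_1, M_2 be open subgroups of a profinite group F and let N_1 be an open subgroup with M_1 ≤ N_1 ≤ F. Then (F : M_1 ∩ M_2) = (F : M_1)(F : M_2) if and only if both (F : N_1 ∩ M_2) = (F : N_1)(F : M_2) and (N_1 : M_1 ∩ (N_1 ∩ M_2)) = (N_1 : M_1)(N_1 : N_1 ∩ M_2). -/
/-- Tower property of independence of open subgroups of a profinite group: for open subgroups
`M₁ ≤ N₁` and `M₂` of `F`, `M₁, M₂` are `F`-independent iff `N₁, M₂` are `F`-independent and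
`M₁, N₁ ⊓ M₂` are `N₁`-independent. Here `(N₁ : K)` for `K ≤ N₁` is expressed via `relindex`. -/
theorem stmt_1 {F : Type*} [Group F] [TopologicalSpace F] [IsTopologicalGroup F]
    [CompactSpace F] [TotallyDisconnectedSpace F] [T2Space F]
    (M₁ M₂ N₁ : Subgroup F) (hM₁ : IsOpen (M₁ : Set F)) (hM₂ : IsOpen (M₂ : Set F))
    (hN₁ : IsOpen (N₁ : Set F)) (hle : M₁ ≤ N₁) :
    (M₁ ⊓ M₂).index = M₁.index * M₂.index ↔
      ((N₁ ⊓ M₂).index = N₁.index * M₂.index ∧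
        (M₁ ⊓ (N₁ ⊓ M₂)).relIndex N₁ = M₁.relIndex N₁ * (N₁ ⊓ M₂).relIndex N₁) := by
  -- finiteness of the relevant indices
  have hfin : ∀ (H : Subgroup F), IsOpen (H : Set F) → H.index ≠ 0 := by
    intro H hH
    have : Finite (F ⧸ H) := H.quotient_finite_of_isOpen hH
    exact Subgroup.index_ne_zero_of_finite
  have hM₁i : M₁.index ≠ 0 := hfin M₁ hM₁
  have hM₂i : M₂.index ≠ 0 := hfin M₂ hM₂
  have hN₁i : N₁.index ≠ 0 := hfin N₁ hN₁
  -- notation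
  set n := N₁.index with hn
  set m₂ := M₂.index
  set a := M₁.relIndex N₁ with ha
  set b := (N₁ ⊓ M₂).relIndex N₁ with hb
  set c := (M₁ ⊓ M₂).relIndex N₁ with hc
  have hM₁M₂le : M₁ ⊓ M₂ ≤ N₁ := le_trans inf_le_left hle
  have hN₁M₂le : N₁ ⊓ M₂ ≤ N₁ := inf_le_left
  have h1 : c * n = (M₁ ⊓ M₂).index := Subgroup.relIndex_mul_index hM₁M₂le
  have h2 : a * n = M₁.index := Subgroup.relIndex_mul_index hle
  have h3 : b * n = (N₁ ⊓ M₂).index := Subgroup.relIndex_mul_index hN₁M₂le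
  have heq : M₁ ⊓ (N₁ ⊓ M₂) = M₁ ⊓ M₂ := by
    rw [← inf_assoc, inf_of_le_left hle]
  have han : a ≠ 0 := by
    intro h0; apply hM₁i; rw [← h2, h0, zero_mul]
  -- key inequalities
  have hcab : c ≤ a * b := by
    rw [hc, ← heq, ha, hb]
    exact Subgroup.relIndex_inf_le
  have hbm : b ≤ m₂ := by
    have := Subgroup.index_inf_le (H := N₁) (K := M₂)
    rw [← h3] at this
    -- b * n ≤ n * m₂
    exact Nat.le_of_mul_le_mul_right (by rwa [mul_comm n m₂] at this) (Nat.pos_of_ne_zero hN₁i)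
  rw [heq]
  constructor
  · intro h
    -- h : (M₁ ⊓ M₂).index = M₁.index * M₂.index
    have hcn : c * n = a * n * m₂ := by rw [h1, h2, h]
    have hc' : c = a * m₂ := by
      have : c * n = a * m₂ * n := by rw [hcn]; ring
      exact Nat.eq_of_mul_eq_mul_right (Nat.pos_of_ne_zero hN₁i) this
    have hbm' : b = m₂ := by
      have h4 : a * m₂ ≤ a * b := hc' ▸ hcab
      have h5 : m₂ ≤ b := Nat.le_of_mul_le_mul_left h4 (Nat.pos_of_ne_zero han)
      exact le_antisymm hbm h5
    constructor
    · rw [← h3, hbm']; ring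
    · show c = a * b
      rw [hc', hbm']
  · rintro ⟨h4, h5⟩
    have hbm' : b = m₂ := by
      have : b * n = m₂ * n := by rw [h3, h4, mul_comm]
      exact Nat.eq_of_mul_eq_mul_right (Nat.pos_of_ne_zero hN₁i) this
    have hc' : c = a * b := h5
    rw [← h1, ← h2, hc', hbm']; ring
end

section
/- Let M_1, ..., M_n and N_1, ..., N_n be open subgroups of a profinite group F with M_i ≤ N_i for each i. If (F : ⋂ M_i) = ∏ (F : M_i), then (F : ⋂ N_i) = ∏ (F : N_i). In other words, F-independence of open subgroups passes to larger open subgroups. -/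
/-- `F`-independence of open subgroups passes to larger open subgroups: if `M i ≤ N i` and the
`M i` are `F`-independent, then so are the `N i`. -/
theorem stmt_3 {F : Type*} [Group F] [TopologicalSpace F] [IsTopologicalGroup F]
    [CompactSpace F] [TotallyDisconnectedSpace F] [T2Space F]
    (n : ℕ) (M N : Fin n → Subgroup F) (hM : ∀ i, IsOpen (M i : Set F))
    (hN : ∀ i, IsOpen (N i : Set F)) (hMN : ∀ i, M i ≤ N i)
    (h : (⨅ i, M i).index = ∏ i, (M i).index) :
    (⨅ i, N i).index = ∏ i, (N i).index := by
  -- finiteness of indices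
  have hMfin : ∀ i, (M i).index ≠ 0 := by
    intro i
    have : Finite (F ⧸ M i) := Subgroup.quotient_finite_of_isOpen (M i) (hM i)
    exact Subgroup.index_ne_zero_of_finite
  -- relindex of M i in N i
  set r : Fin n → ℕ := fun i => (M i).relIndex (N i) with hr
  have hkey : ∀ i, r i * (N i).index = (M i).index := fun i =>
    Subgroup.relIndex_mul_index (hMN i)
  have hrne : ∀ i, r i ≠ 0 := by
    intro i hz
    exact hMfin i (by rw [← hkey i, hz, zero_mul])
  have hle : ⨅ i, M i ≤ ⨅ i, N i := iInf_mono hMN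
  -- chain of inequalities
  have h1 : (⨅ i, M i).relIndex (⨅ i, N i) * (⨅ i, N i).index = (⨅ i, M i).index :=
    Subgroup.relIndex_mul_index hle
  have h2 : (⨅ i, M i).relIndex (⨅ i, N i) ≤ ∏ i, (M i).relIndex (⨅ j, N j) :=
    Subgroup.relIndex_iInf_le M
  have h3 : ∀ i, (M i).relIndex (⨅ j, N j) ≤ r i := by
    intro i
    exact Subgroup.relIndex_le_of_le_right (iInf_le N i) (hrne i)
  have h4 : (⨅ i, N i).index ≤ ∏ i, (N i).index := Subgroup.index_iInf_le N
  have hA : (∏ i, (M i).index) ≤ (∏ i, r i) * (⨅ i, N i).index := by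
    calc (∏ i, (M i).index) = (⨅ i, M i).index := h.symm
      _ = (⨅ i, M i).relIndex (⨅ i, N i) * (⨅ i, N i).index := h1.symm
      _ ≤ (∏ i, (M i).relIndex (⨅ j, N j)) * (⨅ i, N i).index :=
          Nat.mul_le_mul_right _ h2
      _ ≤ (∏ i, r i) * (⨅ i, N i).index :=
          Nat.mul_le_mul_right _ (Finset.prod_le_prod' fun i _ => h3 i)
  have hB : (∏ i, r i) * (⨅ i, N i).index ≤ (∏ i, r i) * ∏ i, (N i).index :=
    Nat.mul_le_mul_left _ h4
  have hC : (∏ i, r i) * ∏ i, (N i).index = ∏ i, (M i).index := by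
    rw [← Finset.prod_mul_distrib]
    exact Finset.prod_congr rfl fun i _ => hkey i
  have heq : (∏ i, r i) * (⨅ i, N i).index = (∏ i, r i) * ∏ i, (N i).index :=
    le_antisymm hB (le_trans (hC ▸ le_refl _) hA)
  have hprod_ne : (∏ i, r i) ≠ 0 := Finset.prod_ne_zero_iff.mpr fun i _ => hrne i
  exact Nat.eq_of_mul_eq_mul_left (Nat.pos_of_ne_zero hprod_ne) heq
end

section
/- Let φ : F → G be an epimorphism of a profinite group F onto a finite group G, and let α : H → G be an epimorphism of finite groups. Let I be a finite index set, H^I_G the fiber product over G of I copies of H (with respect to α), and α^I : H^I_G → G the canonical epimorphism. Given homomorphisms ψ_i : F → H with α ∘ ψ_i = φ for each i ∈ I, let ψ^I : F → H^I_G be the induced homomorphism with i-th coordinate ψ_i. Then ψ^I is surjective if and only if every ψ_i is surjective and the kernels Ker ψ_i are Ker φ-independent, i.e. (Ker φ : ⋂_i Ker ψ_i) = ∏_i (Ker φ : Ker ψ_i). -/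
/-- The fiber product of a family of groups `H i` with respect to homomorphisms `α i : H i → G₀`. -/
def fiberProduct {ι : Type*} (H : ι → Type*) [∀ i, Group (H i)] (G₀ : Type*) [Group G₀]
    (α : ∀ i, H i →* G₀) : Subgroup (∀ i, H i) where
  carrier := {x | ∀ i j, α i (x i) = α j (x j)}
  one_mem' := by intro i j; simp
  mul_mem' := by intro a b ha hb i j; simp [ha i j, hb i j]
  inv_mem' := by intro a ha i j; simp [ha i j]

/-- If termwise `a i ≤ b i` with `b i` positive and the products agree, the terms agree. -/
lemma prod_nat_eq_of_le_of_prod_eq {ι : Type*} [DecidableEq ι] (s : Finset ι) (a b : ι → ℕ)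
    (hle : ∀ i ∈ s, a i ≤ b i) (hpos : ∀ i ∈ s, 0 < b i)
    (heq : ∏ i ∈ s, a i = ∏ i ∈ s, b i) : ∀ i ∈ s, a i = b i := by
  intro j hj
  by_contra hne
  have hlt : a j < b j := lt_of_le_of_ne (hle j hj) hne
  have h1 : ∏ i ∈ s, a i ≤ a j * ∏ i ∈ s.erase j, b i := by
    rw [← Finset.mul_prod_erase s a hj]
    exact Nat.mul_le_mul_left _ (Finset.prod_le_prod (fun i _ => Nat.zero_le _)
      fun i hi => hle i (Finset.mem_of_mem_erase hi))
  have hpos' : 0 < ∏ i ∈ s.erase j, b i :=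
    Finset.prod_pos fun i hi => hpos i (Finset.mem_of_mem_erase hi)
  have h2 : a j * ∏ i ∈ s.erase j, b i < b j * ∏ i ∈ s.erase j, b i :=
    Nat.mul_lt_mul_of_pos_right hlt hpos'
  rw [Finset.mul_prod_erase s b hj] at h2
  exact absurd heq (Nat.ne_of_lt (lt_of_le_of_lt h1 h2))

/-- Solutions `ψ i` of a finite embedding problem `(φ : F → G, α : H → G)` for a profinite
group `F`, indexed by a finite set `I`, induce a solution `ψ^I : F → H^I_G` into the fiber
product of `I` copies of `H` over `G`.  Then `ψ^I` is surjective iff each `ψ i` is surjective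
and the kernels `Ker (ψ i)` are `Ker φ`-independent. -/
theorem stmt_6 {F : Type} [Group F] [TopologicalSpace F] [IsTopologicalGroup F]
    [CompactSpace F] [TotallyDisconnectedSpace F] [T2Space F]
    {G H : Type} [Group G] [Finite G] [Group H] [Finite H]
    (φ : F →* G) (hφo : IsOpen (φ.ker : Set F)) (hφs : Function.Surjective φ)
    (α : H →* G) (hαs : Function.Surjective α)
    {I : Type} [Fintype I]
    (ψ : I → (F →* H)) (hψo : ∀ i, IsOpen ((ψ i).ker : Set F))
    (hsol : ∀ i, α.comp (ψ i) = φ)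
    (ψI : F → ↥(fiberProduct (fun _ : I => H) G (fun _ => α)))
    (hψI : ∀ x i, ((ψI x : ∀ _ : I, H) i) = ψ i x) :
    Function.Surjective ψI ↔
      ((∀ i, Function.Surjective (ψ i)) ∧
        (⨅ i, (ψ i).ker).relIndex φ.ker = ∏ i, ((ψ i).ker).relIndex φ.ker) := by
  classical
  have hαψ : ∀ i x, α (ψ i x) = φ x := fun i x => DFunLike.congr_fun (hsol i) x
  set N := φ.ker with hN
  let r : I → (↥N →* H) := fun i => (ψ i).comp N.subtype
  let R : ↥N →* (I → H) := Pi.monoidHom r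
  have hRdef : ∀ (n : ↥N) i, R n i = ψ i (n : F) := fun n i => rfl
  have hrange_r : ∀ i, (r i).range ≤ α.ker := by
    rintro i _ ⟨n, rfl⟩
    have hn : φ (n : F) = 1 := n.2
    simp [MonoidHom.mem_ker, r, hαψ, hn]
  -- relIndex identities
  have hrel_r : ∀ i, ((ψ i).ker).relIndex φ.ker = Nat.card (r i).range := by
    intro i
    have hker : (r i).ker = ((ψ i).ker).subgroupOf N := rfl
    have := Nat.card_congr (QuotientGroup.quotientKerEquivRange (r i)).toEquiv
    rw [← this, hker]
    rfl
  have hrel_R : (⨅ i, (ψ i).ker).relIndex φ.ker = Nat.card R.range := by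
    have hker : R.ker = (⨅ i, (ψ i).ker).subgroupOf N := by
      ext n
      simp only [MonoidHom.mem_ker, Subgroup.mem_subgroupOf, Subgroup.mem_iInf, funext_iff]
      constructor
      · intro h i; exact h i
      · intro h i; exact h i
    have := Nat.card_congr (QuotientGroup.quotientKerEquivRange R).toEquiv
    rw [← this, hker]
    rfl
  -- cardinality of pi subgroups
  have hcard_pi : ∀ (S : I → Subgroup H),
      Nat.card (Subgroup.pi Set.univ S) = ∏ i, Nat.card (S i) := by
    intro S
    rw [← Nat.card_pi]
    exact Nat.card_congr
      ⟨fun x i => ⟨x.1 i, x.2 i (Set.mem_univ i)⟩,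
       fun y => ⟨fun i => (y i).1, fun i _ => (y i).2⟩,
       fun x => rfl, fun y => rfl⟩
  let Kpi : Subgroup (I → H) := Subgroup.pi Set.univ fun _ => α.ker
  have hRK : R.range ≤ Kpi := by
    rintro _ ⟨n, rfl⟩ i _
    exact hrange_r i ⟨n, rfl⟩
  have hRP : R.range ≤ Subgroup.pi Set.univ fun i => (r i).range := by
    rintro _ ⟨n, rfl⟩ i _
    exact ⟨n, rfl⟩
  -- characterization of surjectivity of ψ i
  have hsurj_iff : ∀ i, Function.Surjective (ψ i) ↔ (r i).range = α.ker := by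
    intro i
    constructor
    · intro hs
      refine le_antisymm (hrange_r i) ?_
      intro h hh
      obtain ⟨x, rfl⟩ := hs h
      have hx : x ∈ N := by
        rw [hN, MonoidHom.mem_ker, ← hαψ i x]
        exact hh
      exact ⟨⟨x, hx⟩, rfl⟩
    · intro he h
      obtain ⟨x, hx⟩ := hφs (α h)
      have hmem : (ψ i x)⁻¹ * h ∈ α.ker := by
        simp [MonoidHom.mem_ker, hαψ, hx]
      rw [← he] at hmem
      obtain ⟨n, hn⟩ := hmem
      refine ⟨x * (n : F), ?_⟩
      have : ψ i (n : F) = (ψ i x)⁻¹ * h := hn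
      rw [map_mul, this, mul_inv_cancel_left]
  rcases isEmpty_or_nonempty I with hI | hI
  · constructor
    · intro _
      refine ⟨fun i => isEmptyElim i, ?_⟩
      rw [iInf_of_empty]
      simp [Subgroup.relIndex_top_left, Finset.univ_eq_empty]
    · intro _ p
      exact ⟨1, Subtype.ext (funext fun i => isEmptyElim i)⟩
  · obtain ⟨i₀⟩ := hI
    -- key: surjectivity of ψI iff R.range = Kpi
    have key : Function.Surjective ψI ↔ R.range = Kpi := by
      constructor
      · intro hs
        refine le_antisymm hRK ?_
        intro k hk
        have hkfp : k ∈ fiberProduct (fun _ : I => H) G (fun _ => α) := by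
          intro i j
          have hi : α (k i) = 1 := hk i (Set.mem_univ i)
          have hj : α (k j) = 1 := hk j (Set.mem_univ j)
          simp only [hi, hj]
        obtain ⟨x, hx⟩ := hs ⟨k, hkfp⟩
        have hxk : ∀ i, ψ i x = k i := by
          intro i
          rw [← hψI x i, hx]
        have hxN : x ∈ N := by
          rw [hN, MonoidHom.mem_ker, ← hαψ i₀ x, hxk i₀]
          exact hk i₀ (Set.mem_univ i₀)
        exact ⟨⟨x, hxN⟩, funext fun i => hxk i⟩
      · intro he p
        obtain ⟨x, hx⟩ := hφs (α ((p : ∀ _ : I, H) i₀))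
        have hq : (fun i => (ψ i x)⁻¹ * (p : ∀ _ : I, H) i) ∈ Kpi := by
          intro i _
          have hpf : α ((p : ∀ _ : I, H) i₀) = α ((p : ∀ _ : I, H) i) := p.2 i₀ i
          simp [MonoidHom.mem_ker, hαψ, hx, hpf]
        rw [← he] at hq
        obtain ⟨n, hn⟩ := hq
        refine ⟨x * (n : F), Subtype.ext (funext fun i => ?_)⟩
        have hni : ψ i (n : F) = (ψ i x)⁻¹ * (p : ∀ _ : I, H) i := congrFun hn i
        rw [hψI, map_mul, hni, mul_inv_cancel_left]
    rw [key]
    have hcardKpi : Nat.card Kpi = ∏ _i : I, Nat.card α.ker := hcard_pi _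
    have hcardP : Nat.card (Subgroup.pi Set.univ fun i => (r i).range)
        = ∏ i, Nat.card (r i).range := hcard_pi _
    constructor
    · intro he
      have hcardR : Nat.card R.range = ∏ _i : I, Nat.card α.ker := by
        rw [he, hcardKpi]
      have hchain : (∏ _i : I, Nat.card α.ker) ≤ ∏ i, Nat.card (r i).range := by
        rw [← hcardR, ← hcardP]
        exact Subgroup.card_le_of_le hRP
      have hle : ∀ i ∈ (Finset.univ : Finset I), Nat.card (r i).range ≤ Nat.card α.ker :=
        fun i _ => Subgroup.card_le_of_le (hrange_r i)
      have hprod_eq : (∏ i, Nat.card (r i).range) = ∏ _i : I, Nat.card α.ker :=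
        le_antisymm (Finset.prod_le_prod (fun i _ => Nat.zero_le _) hle) hchain
      have hterm : ∀ i ∈ (Finset.univ : Finset I),
          Nat.card (r i).range = Nat.card α.ker :=
        prod_nat_eq_of_le_of_prod_eq (s := Finset.univ) _ _ hle (fun i _ => Nat.card_pos) hprod_eq
      refine ⟨fun i => (hsurj_iff i).mpr ?_, ?_⟩
      · exact Subgroup.eq_of_le_of_card_ge (hrange_r i) (hterm i (Finset.mem_univ i)).ge
      · rw [hrel_R, hcardR, ← hprod_eq]
        exact Finset.prod_congr rfl fun i _ => (hrel_r i).symm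
    · rintro ⟨hsurj, hrel⟩
      have hterms : ∀ i, Nat.card (r i).range = Nat.card α.ker := by
        intro i
        rw [(hsurj_iff i).mp (hsurj i)]
      have hcardR : Nat.card R.range = Nat.card Kpi := by
        rw [← hrel_R, hrel, hcardKpi]
        refine Finset.prod_congr rfl fun i _ => ?_
        rw [hrel_r i, hterms i]
      exact Subgroup.eq_of_le_of_card_ge hRK hcardR.ge
end

section
/- Let F be a countably generated profinite group of infinite rank. Then every nontrivial finite split embedding problem for F has countably infinitely many independent proper solutions if and only if every finite split embedding problem for F is properly solvable. -/
section SemiFreeAux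

lemma auxA_card {G H : Type*} [Group G] [Group H] (α : H →* G) (hα : Function.Surjective α) :
    Nat.card H = Nat.card G * Nat.card α.ker := by
  rw [Subgroup.card_eq_card_quotient_mul_card_subgroup α.ker,
    Nat.card_congr (QuotientGroup.quotientKerEquivOfSurjective α hα).toEquiv]

lemma auxA_single {F G H : Type*} [Group F] [Group G] [Group H] [Finite G] [Finite H]
    (φ : F →* G) (α : H →* G) (ψ : F →* H) (hc : α.comp ψ = φ)
    (hφ : Function.Surjective φ) (hψ : Function.Surjective ψ) :
    ψ.ker.relIndex φ.ker = Nat.card α.ker := by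
  have hα : Function.Surjective α := by
    intro g
    obtain ⟨x, hx⟩ := hφ g
    exact ⟨ψ x, by rw [← hx, ← hc]; rfl⟩
  have hle : ψ.ker ≤ φ.ker := by
    intro x hx
    simp only [MonoidHom.mem_ker] at hx ⊢
    rw [← hc, MonoidHom.comp_apply, hx, map_one]
  have h1 : ψ.ker.relIndex φ.ker * φ.ker.index = ψ.ker.index :=
    Subgroup.relIndex_mul_index hle
  have hφi : φ.ker.index = Nat.card G := by
    rw [Subgroup.index_ker, MonoidHom.range_eq_top.mpr hφ]
    exact Nat.card_congr Subgroup.topEquiv.toEquiv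
  have hψi : ψ.ker.index = Nat.card H := by
    rw [Subgroup.index_ker, MonoidHom.range_eq_top.mpr hψ]
    exact Nat.card_congr Subgroup.topEquiv.toEquiv
  have hG : 0 < Nat.card G := Nat.card_pos
  rw [hφi, hψi, auxA_card α hα, mul_comm (Nat.card G)] at h1
  exact Nat.eq_of_mul_eq_mul_right hG h1

lemma auxA_relIndex_le {F : Type*} [Group F] (L : Subgroup F) (f : ℕ → Subgroup F)
    (t : Finset ℕ) : (⨅ i ∈ t, f i).relIndex L ≤ ∏ i ∈ t, (f i).relIndex L := by
  classical
  induction t using Finset.induction with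
  | empty => simp
  | @insert a s ha ih =>
      rw [Finset.iInf_insert, Finset.prod_insert ha]
      exact le_trans Subgroup.relIndex_inf_le (Nat.mul_le_mul_left _ ih)

lemma auxA_step {F G H : Type} [Group F] [TopologicalSpace F] [IsTopologicalGroup F]
    [CompactSpace F] [Group G] [Finite G] [Group H] [Finite H]
    (hsolv : ∀ (G' H' : Type) [Group G'] [Finite G'] [Group H'] [Finite H'] (φ : F →* G')
        (α : H' →* G'), IsOpen (φ.ker : Set F) → Function.Surjective φ →
        Function.Surjective α → (∃ s : G' →* H', α.comp s = MonoidHom.id G') →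
        ∃ ψ : F →* H', IsOpen (ψ.ker : Set F) ∧ α.comp ψ = φ ∧ Function.Surjective ψ)
    (φ : F →* G) (α : H →* G) (hφ : Function.Surjective φ) (hα : Function.Surjective α)
    (s : G →* H) (hs : α.comp s = MonoidHom.id G)
    (N : Subgroup F) [N.Normal] (hNopen : IsOpen (N : Set F)) (hNle : N ≤ φ.ker) :
    ∃ ψ : F →* H, IsOpen (ψ.ker : Set F) ∧ α.comp ψ = φ ∧ Function.Surjective ψ ∧
      (N ⊓ ψ.ker).index = N.index * Nat.card α.ker := by
  haveI : Finite (F ⧸ N) := N.quotient_finite_of_isOpen hNopen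
  set φbar : F ⧸ N →* G := QuotientGroup.lift N φ hNle with hφbar
  have hφbar_mk : ∀ x : F, φbar (QuotientGroup.mk' N x) = φ x := fun x =>
    QuotientGroup.lift_mk' (N := N) hNle x
  have hsα : ∀ g : G, α (s g) = g := fun g => DFunLike.congr_fun hs g
  set H' : Subgroup ((F ⧸ N) × H) :=
    MonoidHom.eqLocus (α.comp (MonoidHom.snd _ _)) (φbar.comp (MonoidHom.fst _ _)) with hH'
  have hmemH' : ∀ p : (F ⧸ N) × H, p ∈ H' ↔ α p.2 = φbar p.1 := fun p => Iff.rfl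
  set α' : H' →* F ⧸ N := (MonoidHom.fst _ _).comp H'.subtype with hα'
  have hα'surj : Function.Surjective α' := by
    intro x
    obtain ⟨h, hh⟩ := hα (φbar x)
    exact ⟨⟨(x, h), hh⟩, rfl⟩
  set s' : F ⧸ N →* H' :=
    ((MonoidHom.id _).prod (s.comp φbar)).codRestrict H' (fun x => hsα (φbar x)) with hs'
  have hα's' : α'.comp s' = MonoidHom.id (F ⧸ N) := by ext x; rfl
  obtain ⟨Ψ, hΨopen, hΨcomp, hΨsurj⟩ := hsolv (F ⧸ N) H' (QuotientGroup.mk' N) α'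
    (by rw [show ((QuotientGroup.mk' N).ker : Set F) = (N : Set F) by
          rw [QuotientGroup.ker_mk']]; exact hNopen)
    (QuotientGroup.mk'_surjective N) hα'surj ⟨s', hα's'⟩
  have hfst : ∀ x : F, ((Ψ x : (F ⧸ N) × H)).1 = QuotientGroup.mk' N x := fun x =>
    DFunLike.congr_fun hΨcomp x
  have hmem : ∀ x : F, α ((Ψ x : (F ⧸ N) × H)).2 = φbar ((Ψ x : (F ⧸ N) × H)).1 :=
    fun x => (Ψ x).2
  set ψ : F →* H := (MonoidHom.snd _ _).comp (H'.subtype.comp Ψ) with hψdef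
  have hψ_apply : ∀ x : F, ψ x = ((Ψ x : (F ⧸ N) × H)).2 := fun x => rfl
  have hcomp : α.comp ψ = φ := by
    ext x
    show α (((Ψ x : (F ⧸ N) × H)).2) = φ x
    rw [hmem x, hfst x, hφbar_mk]
  have hψsurj : Function.Surjective ψ := by
    intro h
    obtain ⟨f, hf⟩ := hφ (α h)
    have hmemp : ((QuotientGroup.mk' N f : F ⧸ N), h) ∈ H' := by
      rw [hmemH']
      simp only [hφbar_mk, hf]
    obtain ⟨x, hx⟩ := hΨsurj ⟨_, hmemp⟩
    refine ⟨x, ?_⟩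
    rw [hψ_apply, hx]
  have hkerle : Ψ.ker ≤ ψ.ker := by
    intro x hx
    rw [MonoidHom.mem_ker] at hx ⊢
    rw [hψ_apply, hx]
    rfl
  have hopen : IsOpen (ψ.ker : Set F) := Subgroup.isOpen_mono hkerle hΨopen
  have hkerΨ : Ψ.ker = N ⊓ ψ.ker := by
    ext x
    rw [MonoidHom.mem_ker, Subgroup.mem_inf, MonoidHom.mem_ker]
    constructor
    · intro hx
      constructor
      · rw [← QuotientGroup.eq_one_iff (N := N) x]
        have := hfst x
        rw [hx] at this
        exact this.symm.trans rfl
      · rw [hψ_apply, hx]; rfl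
    · rintro ⟨h1, h2⟩
      have hp1 : ((Ψ x : (F ⧸ N) × H)).1 = 1 := by
        rw [hfst x]
        exact (QuotientGroup.eq_one_iff x).mpr h1
      have hp2 : ((Ψ x : (F ⧸ N) × H)).2 = 1 := h2
      apply Subtype.ext
      exact Prod.ext hp1 hp2
  have hΨidx : Ψ.ker.index = Nat.card H' := by
    rw [Subgroup.index_ker, MonoidHom.range_eq_top.mpr hΨsurj]
    exact Nat.card_congr Subgroup.topEquiv.toEquiv
  have hcardH' : Nat.card H' = N.index * Nat.card α.ker := by
    have e : H' ≃ (F ⧸ N) × α.ker :=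
      { toFun := fun p => (p.1.1, ⟨p.1.2 * (s (φbar p.1.1))⁻¹, by
          have hp := (hmemH' p.1).mp p.2
          rw [MonoidHom.mem_ker, map_mul, map_inv, hp, hsα, mul_inv_cancel]⟩)
        invFun := fun q => ⟨(q.1, q.2.1 * s (φbar q.1)), by
          rw [hmemH']
          have hk : α q.2.1 = 1 := q.2.2
          rw [map_mul, hk, one_mul, hsα]⟩
        left_inv := fun p => by
          apply Subtype.ext
          show ((↑p : (F ⧸ N) × H).1, ((↑p : (F ⧸ N) × H).2 * (s (φbar (↑p : (F ⧸ N) × H).1))⁻¹)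
              * s (φbar (↑p : (F ⧸ N) × H).1)) = (↑p : (F ⧸ N) × H)
          rw [inv_mul_cancel_right]
        right_inv := fun q => by
          have h2 : ((↑q.2 : H) * s (φbar q.1)) * (s (φbar q.1))⁻¹ = (↑q.2 : H) :=
            mul_inv_cancel_right _ _
          exact Prod.ext rfl (Subtype.ext h2) }
    rw [Nat.card_congr e, Nat.card_prod, Subgroup.index_eq_card]
  exact ⟨ψ, hopen, hcomp, hψsurj, by rw [← hkerΨ, hΨidx, hcardH']⟩

lemma auxA_bwd (F : Type) [Group F] [TopologicalSpace F] [IsTopologicalGroup F] [CompactSpace F]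
    (hsolv : ∀ (G' H' : Type) [Group G'] [Finite G'] [Group H'] [Finite H'] (φ : F →* G')
        (α : H' →* G'), IsOpen (φ.ker : Set F) → Function.Surjective φ →
        Function.Surjective α → (∃ s : G' →* H', α.comp s = MonoidHom.id G') →
        ∃ ψ : F →* H', IsOpen (ψ.ker : Set F) ∧ α.comp ψ = φ ∧ Function.Surjective ψ)
    (G H : Type) [Group G] [Finite G] [Group H] [Finite H] (φ : F →* G) (α : H →* G)
    (hφopen : IsOpen (φ.ker : Set F)) (hφ : Function.Surjective φ)
    (hα : Function.Surjective α) (hsplit : ∃ s : G →* H, α.comp s = MonoidHom.id G)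
    (hnb : ¬ Function.Bijective α) :
    ∃ ψ : ℕ → F →* H,
      (∀ i, IsOpen ((ψ i).ker : Set F) ∧ α.comp (ψ i) = φ ∧ Function.Surjective (ψ i)) ∧
      Function.Injective ψ ∧
      ∀ t : Finset ℕ, (⨅ i ∈ t, (ψ i).ker).relIndex φ.ker
          = ∏ i ∈ t, ((ψ i).ker).relIndex φ.ker := by
  classical
  obtain ⟨s, hs⟩ := hsplit
  set K := Nat.card α.ker with hKdef
  have hK2 : 2 ≤ K := by
    have hninj : ¬ Function.Injective α := fun hinj => hnb ⟨hinj, hα⟩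
    have hne : α.ker ≠ ⊥ := fun hbot => hninj ((α.ker_eq_bot_iff).mp hbot)
    haveI : Nontrivial α.ker := (Subgroup.nontrivial_iff_ne_bot α.ker).mpr hne
    exact Finite.one_lt_card
  have hKpos : 0 < K := lt_of_lt_of_le two_pos hK2
  have hstep : ∀ N : Subgroup F, N.Normal → IsOpen (N : Set F) → N ≤ φ.ker →
      ∃ ψ0 : F →* H, IsOpen (ψ0.ker : Set F) ∧ α.comp ψ0 = φ ∧ Function.Surjective ψ0 ∧
        (N ⊓ ψ0.ker).index = N.index * K := by
    intro N hN hO hle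
    haveI := hN
    exact auxA_step hsolv φ α hφ hα s hs N hO hle
  choose nxt hx1 hx2 hx3 hx4 using hstep
  let T := {N : Subgroup F // N.Normal ∧ IsOpen (N : Set F) ∧ N ≤ φ.ker}
  let pick : T → F →* H := fun p => nxt p.1 p.2.1 p.2.2.1 p.2.2.2
  let succ : T → T := fun p =>
    ⟨p.1 ⊓ (pick p).ker,
      by haveI := p.2.1; infer_instance,
      by rw [Subgroup.coe_inf]; exact p.2.2.1.inter (hx1 p.1 p.2.1 p.2.2.1 p.2.2.2),
      le_trans inf_le_left p.2.2.2⟩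
  let chain : ℕ → T := fun n => Nat.rec ⟨φ.ker, inferInstance, hφopen, le_rfl⟩
    (fun _ p => succ p) n
  let ψ : ℕ → F →* H := fun n => pick (chain n)
  have hprops : ∀ i, IsOpen ((ψ i).ker : Set F) ∧ α.comp (ψ i) = φ ∧
      Function.Surjective (ψ i) := fun i =>
    ⟨hx1 _ _ _ _, hx2 _ _ _ _, hx3 _ _ _ _⟩
  have hφidx : φ.ker.index = Nat.card G := by
    rw [Subgroup.index_ker, MonoidHom.range_eq_top.mpr hφ]
    exact Nat.card_congr Subgroup.topEquiv.toEquiv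
  have hGpos : 0 < Nat.card G := Nat.card_pos
  have hidx : ∀ n, (chain n).1.index = Nat.card G * K ^ n := by
    intro n
    induction n with
    | zero =>
        have hc0 : (chain 0).1 = φ.ker := rfl
        rw [pow_zero, mul_one, hc0]
        exact hφidx
    | succ n ih =>
        have h1 : (chain (n + 1)).1 = (chain n).1 ⊓ (ψ n).ker := rfl
        rw [h1, hx4 _ _ _ _, ih, pow_succ, mul_assoc]
  have hchain_eq : ∀ n, (chain n).1 = φ.ker ⊓ ⨅ i ∈ Finset.range n, (ψ i).ker := by
    intro n
    induction n with
    | zero =>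
        have hc0 : (chain 0).1 = φ.ker := rfl
        rw [hc0]
        simp
    | succ n ih =>
        have h1 : (chain (n + 1)).1 = (chain n).1 ⊓ (ψ n).ker := rfl
        rw [h1, ih, Finset.range_add_one, Finset.iInf_insert, inf_assoc,
          inf_comm ((ψ n).ker)]
  have hrel_range : ∀ n, (⨅ i ∈ Finset.range n, (ψ i).ker).relIndex φ.ker = K ^ n := by
    intro n
    set M := ⨅ i ∈ Finset.range n, (ψ i).ker with hM
    have h1 : M.relIndex φ.ker * φ.ker.index = (M ⊓ φ.ker).index := by
      rw [← Subgroup.inf_relIndex_right M φ.ker]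
      exact Subgroup.relIndex_mul_index inf_le_right
    have h2 : (M ⊓ φ.ker).index = Nat.card G * K ^ n := by
      rw [inf_comm, ← hchain_eq n]
      exact hidx n
    rw [h2, hφidx, mul_comm (Nat.card G)] at h1
    exact Nat.eq_of_mul_eq_mul_right hGpos h1
  have hsingle : ∀ i, (ψ i).ker.relIndex φ.ker = K := fun i =>
    auxA_single φ α (ψ i) (hprops i).2.1 hφ (hprops i).2.2
  have hrel : ∀ t : Finset ℕ, (⨅ i ∈ t, (ψ i).ker).relIndex φ.ker = K ^ t.card := by
    intro t
    obtain ⟨n, htn⟩ := t.exists_nat_subset_range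
    set u := Finset.range n \ t with hu
    have hunion : t ∪ u = Finset.range n := Finset.union_sdiff_of_subset htn
    have hdisj : Disjoint t u := Finset.disjoint_sdiff
    have hcard : t.card + u.card = n := by
      rw [← Finset.card_union_of_disjoint hdisj, hunion, Finset.card_range]
    have hsplitinf : (⨅ i ∈ Finset.range n, (ψ i).ker)
        = (⨅ i ∈ t, (ψ i).ker) ⊓ ⨅ i ∈ u, (ψ i).ker := by
      rw [← hunion, ← Finset.inf_eq_iInf, ← Finset.inf_eq_iInf, ← Finset.inf_eq_iInf,
        Finset.inf_union]
    have hA_le : (⨅ i ∈ t, (ψ i).ker).relIndex φ.ker ≤ K ^ t.card := by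
      calc (⨅ i ∈ t, (ψ i).ker).relIndex φ.ker
          ≤ ∏ i ∈ t, ((ψ i).ker).relIndex φ.ker := auxA_relIndex_le _ _ t
        _ = K ^ t.card := by
            rw [Finset.prod_congr rfl (fun i _ => hsingle i), Finset.prod_const]
    have hB_le : (⨅ i ∈ u, (ψ i).ker).relIndex φ.ker ≤ K ^ u.card := by
      calc (⨅ i ∈ u, (ψ i).ker).relIndex φ.ker
          ≤ ∏ i ∈ u, ((ψ i).ker).relIndex φ.ker := auxA_relIndex_le _ _ u
        _ = K ^ u.card := by
            rw [Finset.prod_congr rfl (fun i _ => hsingle i), Finset.prod_const]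
    have hprod_ge : K ^ n ≤ ((⨅ i ∈ t, (ψ i).ker).relIndex φ.ker)
        * ((⨅ i ∈ u, (ψ i).ker).relIndex φ.ker) := by
      rw [← hrel_range n, hsplitinf]
      exact Subgroup.relIndex_inf_le
    refine le_antisymm hA_le ?_
    have hbpos : 0 < K ^ u.card := pow_pos hKpos _
    have hmain : K ^ t.card * K ^ u.card
        ≤ ((⨅ i ∈ t, (ψ i).ker).relIndex φ.ker) * K ^ u.card := by
      calc K ^ t.card * K ^ u.card = K ^ n := by rw [← pow_add, hcard]
        _ ≤ ((⨅ i ∈ t, (ψ i).ker).relIndex φ.ker)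
            * ((⨅ i ∈ u, (ψ i).ker).relIndex φ.ker) := hprod_ge
        _ ≤ ((⨅ i ∈ t, (ψ i).ker).relIndex φ.ker) * K ^ u.card :=
            Nat.mul_le_mul_left _ hB_le
    exact Nat.le_of_mul_le_mul_right hmain hbpos
  refine ⟨ψ, hprops, ?_, ?_⟩
  · intro i j hij
    by_contra hne
    have h2 : (⨅ k ∈ ({i, j} : Finset ℕ), (ψ k).ker).relIndex φ.ker = K ^ 2 := by
      rw [hrel, Finset.card_pair hne]
    have h1 : (⨅ k ∈ ({i, j} : Finset ℕ), (ψ k).ker) = (ψ i).ker := by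
      have : (⨅ k ∈ ({i, j} : Finset ℕ), (ψ k).ker) = (ψ i).ker ⊓ (ψ j).ker := by
        rw [show ({i, j} : Finset ℕ) = insert i {j} from rfl, Finset.iInf_insert,
          Finset.iInf_singleton]
      rw [this, ← hij, inf_idem]
    rw [h1, hsingle i] at h2
    rw [pow_two] at h2
    have hKone : K * 1 = K * K := by rw [mul_one]; exact h2
    have : (1 : ℕ) = K := Nat.eq_of_mul_eq_mul_left hKpos hKone
    omega
  · intro t
    rw [hrel t, Finset.prod_congr rfl (fun i _ => hsingle i), Finset.prod_const]

end SemiFreeAux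

/-- For a countably generated profinite group `F` of infinite rank, `F` is semi-free (of rank
`ℵ₀`), i.e. every nontrivial finite split embedding problem for `F` has countably infinitely many
independent proper solutions, if and only if every finite split embedding problem for `F` is
properly solvable.  Here embedding problems are pairs of continuous epimorphisms
`(φ : F → G, α : H → G)` with `G, H` finite (continuity being encoded by openness of kernels),
`α` split; nontrivial means `α` is not an isomorphism; solutions `ψ` satisfy `α ∘ ψ = φ` and are
proper when surjective; solutions are independent when their kernels are `Ker φ`-independent. -/
theorem stmt_7 (F : Type) [Group F] [TopologicalSpace F] [IsTopologicalGroup F]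
    [CompactSpace F] [TotallyDisconnectedSpace F] [T2Space F]
    (hcount : ∃ s : Set F, s.Countable ∧ (Subgroup.closure s).topologicalClosure = ⊤)
    (hinfrank : ¬ ∃ s : Set F, s.Finite ∧ (Subgroup.closure s).topologicalClosure = ⊤) :
    (∀ (G H : Type) [Group G] [Finite G] [Group H] [Finite H] (φ : F →* G) (α : H →* G),
        IsOpen (φ.ker : Set F) → Function.Surjective φ → Function.Surjective α →
        (∃ s : G →* H, α.comp s = MonoidHom.id G) → ¬ Function.Bijective α →
        ∃ ψ : ℕ → F →* H,
          (∀ i, IsOpen ((ψ i).ker : Set F) ∧ α.comp (ψ i) = φ ∧ Function.Surjective (ψ i)) ∧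
          Function.Injective ψ ∧
          ∀ t : Finset ℕ, (⨅ i ∈ t, (ψ i).ker).relIndex φ.ker
              = ∏ i ∈ t, ((ψ i).ker).relIndex φ.ker) ↔
      (∀ (G H : Type) [Group G] [Finite G] [Group H] [Finite H] (φ : F →* G) (α : H →* G),
        IsOpen (φ.ker : Set F) → Function.Surjective φ → Function.Surjective α →
        (∃ s : G →* H, α.comp s = MonoidHom.id G) →
        ∃ ψ : F →* H, IsOpen (ψ.ker : Set F) ∧ α.comp ψ = φ ∧ Function.Surjective ψ) := by
  constructor
  · intro hmany G H _ _ _ _ φ α hop hφ hα hsp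
    by_cases hb : Function.Bijective α
    · let e := MulEquiv.ofBijective α hb
      refine ⟨e.symm.toMonoidHom.comp φ, ?_, ?_, ?_⟩
      · have hker : ((e.symm.toMonoidHom.comp φ).ker : Set F) = (φ.ker : Set F) := by
          ext x
          simp only [SetLike.mem_coe, MonoidHom.mem_ker, MonoidHom.comp_apply,
            MulEquiv.coe_toMonoidHom, EmbeddingLike.map_eq_one_iff]
        rw [hker]
        exact hop
      · ext x
        show α (e.symm (φ x)) = φ x
        exact e.apply_symm_apply (φ x)
      · exact e.symm.surjective.comp hφ
    · obtain ⟨ψ, hconds, _, _⟩ := hmany G H φ α hop hφ hα hsp hb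
      exact ⟨ψ 0, (hconds 0).1, (hconds 0).2.1, (hconds 0).2.2⟩
  · intro hsolv G H _ _ _ _ φ α hop hφ hα hsp hnb
    exact auxA_bwd F hsolv G H φ α hop hφ hα hsp hnb
end

section
/- Let F be a profinite group and let 𝓜 be an infinite family of pairwise F-independent open normal subgroups of F. Then 𝓜 contains a subfamily 𝓜_0 of the same cardinality as 𝓜 such that every finite subset of 𝓜_0 is F-independent. -/
open Subgroup

private lemma aux_inf_sup_index {G : Type*} [Group G] (M N : Subgroup G) [N.Normal] :
    (M ⊓ N).index * (M ⊔ N).index = M.index * N.index := by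
  have h1 : (M ⊓ N).relIndex M * M.index = (M ⊓ N).index :=
    Subgroup.relIndex_mul_index inf_le_left
  have h2 : (M ⊓ N).relIndex M = N.relIndex M := Subgroup.inf_relIndex_left M N
  have h3 : N.relIndex (M ⊔ N) = N.relIndex M := Subgroup.relIndex_sup_right M N
  have h4 : N.relIndex (M ⊔ N) * (M ⊔ N).index = N.index :=
    Subgroup.relIndex_mul_index le_sup_right
  calc (M ⊓ N).index * (M ⊔ N).index
      = ((M ⊓ N).relIndex M * M.index) * (M ⊔ N).index := by rw [h1]
    _ = M.index * (N.relIndex (M ⊔ N) * (M ⊔ N).index) := by rw [h2, h3]; ring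
    _ = M.index * N.index := by rw [h4]

private lemma aux_indep_of_sup_top {G : Type*} [Group G] {M N : Subgroup G} [N.Normal]
    (h : M ⊔ N = ⊤) : (M ⊓ N).index = M.index * N.index := by
  have := aux_inf_sup_index M N
  rwa [h, Subgroup.index_top, mul_one] at this

private lemma aux_sup_top_of_indep {G : Type*} [Group G] {M N : Subgroup G} [N.Normal]
    (hM : M.index ≠ 0) (hN : N.index ≠ 0)
    (h : (M ⊓ N).index = M.index * N.index) : M ⊔ N = ⊤ := by
  have h2 := aux_inf_sup_index M N
  rw [h] at h2
  have hne : 0 < M.index * N.index := Nat.pos_of_ne_zero (mul_ne_zero hM hN)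
  have : (M ⊔ N).index = 1 :=
    Nat.eq_of_mul_eq_mul_left hne (by rw [h2, mul_one])
  exact Subgroup.index_eq_one.mp this

private lemma aux_finite_above {G : Type*} [Group G] (N : Subgroup G) [N.Normal]
    [N.FiniteIndex] : {K : Subgroup G | N ≤ K}.Finite := by
  have : Finite (G ⧸ N) := Subgroup.finite_quotient_of_finiteIndex
  have hfin : Finite (Subgroup (G ⧸ N)) :=
    Finite.of_injective (fun K => (K : Set (G ⧸ N))) SetLike.coe_injective
  apply Set.Finite.of_finite_image (f := Subgroup.map (QuotientGroup.mk' N))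
  · exact Set.toFinite _
  · intro K₁ h₁ K₂ h₂ h
    exact Subgroup.map_injective_of_ker_le (QuotientGroup.mk' N)
      (by rw [QuotientGroup.ker_mk']; exact h₁) (by rw [QuotientGroup.ker_mk']; exact h₂) h

private lemma aux_iInf_insert {G : Type*} [Group G] [DecidableEq (Subgroup G)] (a : Subgroup G) (s : Finset (Subgroup G)) :
    (⨅ M ∈ insert a s, M) = a ⊓ ⨅ M ∈ s, M := by
  rw [← Finset.inf_eq_iInf, ← Finset.inf_eq_iInf, Finset.inf_insert]

private lemma aux_iInf_props {G : Type*} [Group G] (t : Finset (Subgroup G))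
    (h : ∀ M ∈ t, M.Normal ∧ M.FiniteIndex) :
    (⨅ M ∈ t, M).Normal ∧ (⨅ M ∈ t, M).FiniteIndex := by
  classical
  induction t using Finset.induction with
  | empty => simp only [Finset.notMem_empty, iInf_false, iInf_top]; exact ⟨inferInstance, inferInstance⟩
  | @insert a s ha ih =>
    rw [aux_iInf_insert]
    obtain ⟨hn, hf⟩ := h a (Finset.mem_insert_self a s)
    obtain ⟨hn', hf'⟩ := ih fun M hM => h M (Finset.mem_insert_of_mem hM)
    exact ⟨Subgroup.normal_inf_normal _ _, inferInstance⟩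

open Subgroup


/-- An infinite family of pairwise `F`-independent open normal subgroups of a profinite group `F`
contains an `F`-independent subfamily of the same cardinality (every finite subset of which
is `F`-independent). -/
theorem stmt_10 {F : Type*} [Group F] [TopologicalSpace F] [IsTopologicalGroup F]
    [CompactSpace F] [TotallyDisconnectedSpace F] [T2Space F]
    (𝓜 : Set (Subgroup F)) (hinf : 𝓜.Infinite)
    (hopen : ∀ M ∈ 𝓜, IsOpen (M : Set F)) (hnorm : ∀ M ∈ 𝓜, M.Normal)
    (hpair : ∀ M ∈ 𝓜, ∀ N ∈ 𝓜, M ≠ N → (M ⊓ N).index = M.index * N.index) :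
    ∃ 𝓜₀ ⊆ 𝓜, Cardinal.mk 𝓜₀ = Cardinal.mk 𝓜 ∧
      ∀ t : Finset (Subgroup F), ↑t ⊆ 𝓜₀ →
        (⨅ M ∈ t, M).index = ∏ M ∈ t, M.index := by
  classical
  have hFI : ∀ M ∈ 𝓜, M.FiniteIndex := by
    intro M hM
    have : Finite (F ⧸ M) := Subgroup.quotient_finite_of_isOpen M (hopen M hM)
    exact Subgroup.finiteIndex_of_finite_quotient
  set 𝒮 : Set (Set (Subgroup F)) :=
    {S | S ⊆ 𝓜 ∧ ∀ t : Finset (Subgroup F), ↑t ⊆ S →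
      (⨅ M ∈ t, M).index = ∏ M ∈ t, M.index} with h𝒮
  have hempty : ∅ ∈ 𝒮 := by
    refine ⟨Set.empty_subset _, fun t ht => ?_⟩
    rw [Set.subset_empty_iff, Finset.coe_eq_empty] at ht
    subst ht; simp
  obtain ⟨S, hSmax⟩ : ∃ S, Maximal (· ∈ 𝒮) S := by
    apply zorn_subset
    intro c hc hchain
    rcases c.eq_empty_or_nonempty with rfl | ⟨s₀, hs₀⟩
    · exact ⟨∅, hempty, by simp⟩
    refine ⟨⋃₀ c, ⟨Set.sUnion_subset fun s hs => (hc hs).1, ?_⟩,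
      fun s hs => Set.subset_sUnion_of_mem hs⟩
    have key : ∀ t : Finset (Subgroup F), ↑t ⊆ ⋃₀ c → ∃ s ∈ c, ↑t ⊆ s := by
      intro t
      induction t using Finset.induction with
      | empty => exact fun _ => ⟨s₀, hs₀, by simp⟩
      | @insert a u ha ih =>
        intro hins
        obtain ⟨s₁, hs₁, hu⟩ := ih (by
          intro x hx
          exact hins (by simpa using Or.inr (by exact_mod_cast hx)))
        obtain ⟨s₂, hs₂, ha2⟩ : ∃ s ∈ c, a ∈ s := by
          have : a ∈ ⋃₀ c := hins (by simp)
          simpa [Set.mem_sUnion] using this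
        rcases hchain.total hs₁ hs₂ with h | h
        · refine ⟨s₂, hs₂, ?_⟩
          intro x hx
          rcases Finset.mem_insert.mp (by exact_mod_cast hx) with rfl | hx'
          · exact ha2
          · exact h (hu (by exact_mod_cast hx'))
        · refine ⟨s₁, hs₁, ?_⟩
          intro x hx
          rcases Finset.mem_insert.mp (by exact_mod_cast hx) with rfl | hx'
          · exact h ha2
          · exact hu (by exact_mod_cast hx')
    intro t ht
    obtain ⟨s, hs, hts⟩ := key t ht
    exact (hc hs).2 t hts
  have hSsub : S ⊆ 𝓜 := hSmax.prop.1
  refine ⟨S, hSsub, ?_, hSmax.prop.2⟩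
  by_contra hne
  have hlt : Cardinal.mk S < Cardinal.mk 𝓜 :=
    lt_of_le_of_ne (Cardinal.mk_le_mk_of_subset hSsub) hne
  set N : Finset (Subgroup F) → Subgroup F := fun t => ⨅ M ∈ t, M with hNdef
  set Bad : Finset (Subgroup F) → Set (Subgroup F) :=
    fun t => {M' ∈ 𝓜 | M' ⊔ N t ≠ ⊤} with hBdef
  set T : Set (Finset (Subgroup F)) := {t | ↑t ⊆ S} with hTdef
  set BadAll : Set (Subgroup F) := S ∪ ⋃ t ∈ T, Bad t with hBAdef
  have hNprops : ∀ t : Finset (Subgroup F), ↑t ⊆ S → (N t).Normal ∧ (N t).FiniteIndex :=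
    fun t ht => aux_iInf_props t fun M hM => ⟨hnorm M (hSsub (ht hM)), hFI M (hSsub (ht hM))⟩
  have hBadFin : ∀ t ∈ T, (Bad t).Finite := by
    intro t ht
    obtain ⟨hNn, hNf⟩ := hNprops t ht
    haveI := hNn; haveI := hNf
    have hinj : Set.InjOn (fun M' => M' ⊔ N t) (Bad t) := by
      intro M₁ h₁ M₂ h₂ heq
      by_contra hne12
      have hp := hpair M₁ h₁.1 M₂ h₂.1 hne12
      have : M₂.Normal := hnorm M₂ h₂.1
      have htop : M₁ ⊔ M₂ = ⊤ :=
        aux_sup_top_of_indep (hFI M₁ h₁.1).index_ne_zero (hFI M₂ h₂.1).index_ne_zero hp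
      have hle : M₁ ⊔ M₂ ≤ M₁ ⊔ N t := by
        refine sup_le le_sup_left ?_
        have : M₂ ≤ M₂ ⊔ N t := le_sup_left
        simpa [← heq] using this
      exact h₁.2 (top_le_iff.mp (htop ▸ hle))
    have himg : ((fun M' => M' ⊔ N t) '' Bad t).Finite := by
      apply (aux_finite_above (N t)).subset
      rintro _ ⟨M', _, rfl⟩
      exact (le_sup_right : N t ≤ M' ⊔ N t)
    exact Set.Finite.of_finite_image himg hinj
  have hgood : ∃ M ∈ 𝓜, M ∉ BadAll := by
    by_cases hSfin : S.Finite
    · have hTfin : T.Finite := by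
        apply Set.Finite.preimage (f := fun t : Finset (Subgroup F) => (↑t : Set (Subgroup F)))
          (Finset.coe_injective.injOn) hSfin.finite_subsets
      have hfin : BadAll.Finite := hSfin.union (hTfin.biUnion hBadFin)
      obtain ⟨M, hM⟩ := (hinf.diff hfin).nonempty
      exact ⟨M, hM.1, hM.2⟩
    · have hSinf : S.Infinite := hSfin
      have : Infinite ↥S := hSinf.to_subtype
      have hT : Cardinal.mk T ≤ Cardinal.mk S := by
        have hsurj : Function.Surjective (fun u : Finset ↥S =>
            (⟨u.map (Function.Embedding.subtype _), by
              intro x hx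
              simp only [Finset.coe_map, Set.mem_image, Finset.mem_coe] at hx
              obtain ⟨y, _, rfl⟩ := hx
              exact y.2⟩ : ↥T)) := by
          rintro ⟨t, ht⟩
          refine ⟨t.subtype (· ∈ S), ?_⟩
          ext1
          simp only [Finset.subtype_map]
          exact Finset.filter_true_of_mem fun x hx => ht hx
        calc Cardinal.mk T ≤ Cardinal.mk (Finset ↥S) := Cardinal.mk_le_of_surjective hsurj
          _ = Cardinal.mk S := Cardinal.mk_finset_of_infinite _
      have hTne : Nonempty ↥T := ⟨⟨∅, by simp [hTdef]⟩⟩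
      have hUnion : Cardinal.mk (⋃ t ∈ T, Bad t) ≤ Cardinal.mk T * Cardinal.aleph0 := by
        refine (Cardinal.mk_biUnion_le _ _).trans ?_
        refine mul_le_mul_right (ciSup_le' fun x => ?_) _
        exact ((hBadFin x.1 x.2).lt_aleph0).le
      have hBA : Cardinal.mk BadAll < Cardinal.mk 𝓜 := by
        have h1 : Cardinal.mk BadAll ≤ Cardinal.mk S + Cardinal.mk T * Cardinal.aleph0 :=
          (Cardinal.mk_union_le _ _).trans (by gcongr)
        have h2 : Cardinal.mk T * Cardinal.aleph0 ≤ Cardinal.mk S := by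
          calc Cardinal.mk T * Cardinal.aleph0 ≤ Cardinal.mk S * Cardinal.aleph0 :=
                mul_le_mul_left hT _
            _ = Cardinal.mk S := Cardinal.mul_aleph0_eq (Cardinal.aleph0_le_mk _)
        calc Cardinal.mk BadAll ≤ Cardinal.mk S + Cardinal.mk S := h1.trans (by gcongr)
          _ = Cardinal.mk S := Cardinal.add_eq_self (Cardinal.aleph0_le_mk _)
          _ < Cardinal.mk 𝓜 := hlt
      by_contra hcon
      push_neg at hcon
      exact absurd (Cardinal.mk_le_mk_of_subset hcon) (not_le_of_gt hBA)
  obtain ⟨M, hM𝓜, hMnot⟩ := hgood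
  have hMS : M ∉ S := fun h => hMnot (Or.inl h)
  have hMgood : ∀ t : Finset (Subgroup F), ↑t ⊆ S → M ⊔ N t = ⊤ := by
    intro t ht
    by_contra hne'
    exact hMnot (Or.inr (Set.mem_biUnion ht ⟨hM𝓜, hne'⟩))
  have hext : insert M S ∈ 𝒮 := by
    refine ⟨Set.insert_subset hM𝓜 hSsub, ?_⟩
    intro t ht
    by_cases hMt : M ∈ t
    · set t' := t.erase M with ht'def
      have ht' : ↑t' ⊆ S := by
        intro x hx
        have hx' : x ∈ t.erase M := by exact_mod_cast hx
        rcases ht (by exact_mod_cast Finset.mem_of_mem_erase hx') with h | h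
        · exact absurd h (Finset.ne_of_mem_erase hx')
        · exact h
      haveI := (hNprops t' ht').1
      haveI := (hNprops t' ht').2
      have h1 : (⨅ M' ∈ t, M') = M ⊓ N t' := by
        conv_lhs => rw [← Finset.insert_erase hMt]
        rw [aux_iInf_insert]
      rw [h1, aux_indep_of_sup_top (hMgood t' ht'), hSmax.prop.2 t' ht',
        Finset.mul_prod_erase t _ hMt]
    · have : ↑t ⊆ S := by
        intro x hx
        rcases ht hx with h | h
        · exact absurd (h ▸ hx) (by exact_mod_cast hMt)
        · exact h
      exact hSmax.prop.2 t this
  have := hSmax.2 hext (Set.subset_insert M S)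
  exact hMS (this (Set.mem_insert M S))
end

section
/- Let φ : F → G be an epimorphism of a profinite group F onto a finite group G, let M be a closed subgroup of F, G_0 = φ(M), and suppose G_0 acts on a finite group A. Let α : A ≀_{G_0} G → G and α_0 : A ⋊ G_0 → G_0 be the canonical projections, and π : Ind_{G_0}^G(A) ⋊ G_0 → A ⋊ G_0 the Shapiro map. If ψ : F → A ≀_{G_0} G is a homomorphism with α ∘ ψ = φ, then ψ(M) ≤ Ind_{G_0}^G(A) ⋊ G_0, and π ∘ ψ|_M : M → A ⋊ G_0 satisfies α_0 ∘ (π ∘ ψ|_M) = φ|_M; that is, π ∘ ψ|_M is a weak solution of the embedding problem (φ|_M : M → G_0, α_0 : A ⋊ G_0 → G_0). -/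
section Wreath

variable {G : Type} [Group G] {A : Type} [Group A]

/-- The induced module `Ind_{G₀}^G(A)`: functions `f : G → A` with `f (σ τ) = f σ ^ τ`
for `σ ∈ G`, `τ ∈ G₀`, where the right `G₀`-action on `A` is `a ^ τ = act τ⁻¹ a`. -/
def Ind (G₀ : Subgroup G) (act : G₀ →* MulAut A) : Subgroup (G → A) where
  carrier := {f | ∀ (σ : G) (τ : G₀), f (σ * τ) = act τ⁻¹ (f σ)}
  one_mem' := by intro σ τ; simp
  mul_mem' := by
    intro a b ha hb σ τ
    simp only [Pi.mul_apply, ha σ τ, hb σ τ, map_mul]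
  inv_mem' := by
    intro a ha σ τ
    simp only [Pi.inv_apply, ha σ τ, map_inv]

/-- The translation automorphism of `G → A` induced by `σ ∈ G`. -/
def shiftAut (σ : G) : (G → A) ≃* (G → A) where
  toFun f := fun ρ => f (σ⁻¹ * ρ)
  invFun f := fun ρ => f (σ * ρ)
  left_inv f := by funext ρ; simp [← mul_assoc]
  right_inv f := by funext ρ; simp [← mul_assoc]
  map_mul' f g := rfl

/-- The action of `G` on `G → A` by translation, `(σ • f) ρ = f (σ⁻¹ ρ)`. -/
def wreathAct : G →* MulAut (G → A) where
  toFun := shiftAut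
  map_one' := by ext f ρ; simp [shiftAut]
  map_mul' σ σ' := by ext f ρ; simp [shiftAut, mul_assoc]

/-- The twisted wreath product `A ≀_{G₀} G`, realized as the subgroup
`Ind_{G₀}^G(A) ⋊ G` of the semidirect product `(G → A) ⋊ G`. -/
def TwistedWreath (G₀ : Subgroup G) (act : G₀ →* MulAut A) :
    Subgroup ((G → A) ⋊[wreathAct] G) where
  carrier := {w | w.left ∈ Ind G₀ act}
  one_mem' := by
    show (1 : (G → A) ⋊[wreathAct] G).left ∈ Ind G₀ act
    simp only [SemidirectProduct.one_left]
    exact (Ind G₀ act).one_mem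
  mul_mem' := by
    intro a b ha hb
    show (a * b).left ∈ Ind G₀ act
    rw [SemidirectProduct.mul_left]
    refine (Ind G₀ act).mul_mem ha ?_
    intro σ τ
    show b.left (a.right⁻¹ * (σ * τ)) = act τ⁻¹ (b.left (a.right⁻¹ * σ))
    rw [← mul_assoc]
    exact hb _ τ
  inv_mem' := by
    intro a ha
    show a⁻¹.left ∈ Ind G₀ act
    rw [SemidirectProduct.inv_left]
    intro σ τ
    have h1 : ∀ ρ : G, (wreathAct a.right⁻¹) a.left⁻¹ ρ = (a.left (a.right * ρ))⁻¹ := by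
      intro ρ; simp [wreathAct, shiftAut]
    rw [h1, h1, ← mul_assoc, ha _ τ]
    simp [map_inv]

end Wreath

/-- Let `φ : F → G` be a continuous epimorphism from a profinite group onto a finite group,
`M ≤ F` closed, `G₀ = φ(M)`, and let `G₀` act on a finite group `A`.  Any solution
`ψ : F → A ≀_{G₀} G` of the embedding problem `(φ, α : A ≀_{G₀} G → G)` maps `M` into
`Ind_{G₀}^G(A) ⋊ G₀`, and composing with the Shapiro map yields a weak solution
`ν = π ∘ ψ|_M` of the embedding problem `(φ|_M : M → G₀, α₀ : A ⋊ G₀ → G₀)`. -/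
theorem stmt_14 {F : Type} [Group F] [TopologicalSpace F] [IsTopologicalGroup F]
    [CompactSpace F] [TotallyDisconnectedSpace F] [T2Space F]
    {G : Type} [Group G] [Finite G] (φ : F →* G) (hφo : IsOpen (φ.ker : Set F))
    (hφs : Function.Surjective φ)
    (M : Subgroup F) (hM : IsClosed (M : Set F))
    {A : Type} [Group A] [Finite A] (act : ↥(M.map φ) →* MulAut A)
    (ψ : F →* ((G → A) ⋊[wreathAct] G)) (hψo : IsOpen (ψ.ker : Set F))
    (hψW : ∀ x, ψ x ∈ TwistedWreath (M.map φ) act)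
    (hψsol : (SemidirectProduct.rightHom).comp ψ = φ) :
    (∀ m ∈ M, (ψ m).left ∈ Ind (M.map φ) act ∧ (ψ m).right ∈ M.map φ) ∧
    ∃ ν : ↥M →* (A ⋊[act] ↥(M.map φ)),
      ∀ m : ↥M, (ν m).left = (ψ ↑m).left 1 ∧ ((ν m).right : G) = φ ↑m := by
  have hright : ∀ x : F, (ψ x).right = φ x := fun x => DFunLike.congr_fun hψsol x
  refine ⟨fun m hm => ⟨hψW m, by rw [hright]; exact ⟨m, hm, rfl⟩⟩, ?_⟩
  refine ⟨MonoidHom.mk' (fun m => ⟨(ψ ↑m).left 1, ⟨φ ↑m, ⟨↑m, m.2, rfl⟩⟩⟩) ?_,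
    fun m => ⟨rfl, rfl⟩⟩
  intro m m'
  set τ : ↥(M.map φ) := ⟨φ ↑m, ⟨↑m, m.2, rfl⟩⟩
  ext
  · show (ψ (↑m * ↑m')).left 1 = (ψ ↑m).left 1 * act τ ((ψ ↑m').left 1)
    rw [map_mul, SemidirectProduct.mul_left]
    have h1 : (wreathAct (ψ ↑m).right ((ψ ↑m').left)) 1
        = (ψ ↑m').left ((ψ ↑m).right⁻¹ * 1) := rfl
    have h2 := hψW ↑m' 1 τ⁻¹
    rw [Pi.mul_apply, h1, mul_one, hright]
    have : (φ ↑m)⁻¹ = (1 : G) * ((τ⁻¹ : ↥(M.map φ)) : G) := by simp [τ]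
    rw [this, h2, inv_inv]
  · show φ (↑m * ↑m') = φ ↑m * φ ↑m'
    exact map_mul φ _ _
end

section
/- Let F be a semi-free profinite group of infinite rank m and M an open subgroup of F. Then M is semi-free of rank m. -/
/-- A profinite group `F` is semi-free of (infinite) rank `m` if every nontrivial finite split
embedding problem `(φ : F → G, α : H → G)` for `F` has a set of `m` independent proper
solutions.  Continuity of homomorphisms to finite groups is encoded by openness of kernels;
independence means that the kernels of any finitely many of the solutions are
`Ker φ`-independent. -/
def IsSemiFree (F : Type) [Group F] [TopologicalSpace F] (m : Cardinal) : Prop :=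
  ∀ (G H : Type) [Group G] [Finite G] [Group H] [Finite H] (φ : F →* G) (α : H →* G),
    IsOpen (φ.ker : Set F) → Function.Surjective φ → Function.Surjective α →
    (∃ s : G →* H, α.comp s = MonoidHom.id G) → ¬ Function.Bijective α →
    ∃ S : Set (F →* H), Cardinal.mk S = m ∧
      (∀ ψ ∈ S, IsOpen (ψ.ker : Set F) ∧ α.comp ψ = φ ∧ Function.Surjective ψ) ∧
      ∀ t : Finset (F →* H), ↑t ⊆ S →
        (⨅ ψ ∈ t, (ψ : F →* H).ker).relIndex φ.ker
          = ∏ ψ ∈ t, ((ψ : F →* H).ker).relIndex φ.ker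

/-- A profinite group has rank `m` if `m` is the least cardinality of a subset generating a
dense subgroup. -/
def HasProfiniteRank (F : Type) [Group F] [TopologicalSpace F] [IsTopologicalGroup F]
    (m : Cardinal) : Prop :=
  (∃ s : Set F, Cardinal.mk s = m ∧ (Subgroup.closure s).topologicalClosure = ⊤) ∧
    ∀ s : Set F, (Subgroup.closure s).topologicalClosure = ⊤ → m ≤ Cardinal.mk s

/-- `F` is a free profinite group with basis `X` (converging to `1`): every map from `X` to a
finite group `A` that is almost everywhere trivial extends uniquely to a continuous
homomorphism `F → A`. -/
def IsProfiniteFreeOn (F : Type) [Group F] [TopologicalSpace F] (X : Set F) : Prop :=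
  ∀ (A : Type) [Group A] [Finite A] (f : X → A), {x : X | f x ≠ 1}.Finite →
    ∃! φ : F →* A, IsOpen (φ.ker : Set F) ∧ ∀ x : X, φ x = f x




lemma aux_topClosure_eq_top_iff_dense {G : Type} [Group G] [TopologicalSpace G]
    [IsTopologicalGroup G] (S : Subgroup G) :
    S.topologicalClosure = ⊤ ↔ Dense (S : Set G) := by
  rw [SetLike.ext'_iff, Subgroup.topologicalClosure_coe, Subgroup.coe_top,
    dense_iff_closure_eq]

lemma aux_mk_closure_le {G : Type} [Group G] (s : Set G) :
    Cardinal.mk (Subgroup.closure s) ≤ max Cardinal.aleph0 (Cardinal.mk s) := by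
  classical
  set ev : s × Bool → G := fun p => if p.2 then (p.1 : G) else (p.1 : G)⁻¹ with hev
  have hevmem : ∀ p : s × Bool, ev p ∈ Subgroup.closure s := by
    intro p
    by_cases h : p.2 = true
    · simpa [ev, h] using Subgroup.subset_closure p.1.2
    · simpa [ev, h] using Subgroup.inv_mem _ (Subgroup.subset_closure p.1.2)
  have hmem : ∀ g ∈ Subgroup.closure s, ∃ l : List (s × Bool), (l.map ev).prod = g := by
    intro g hg
    induction hg using Subgroup.closure_induction with
    | mem x hx => exact ⟨[(⟨x, hx⟩, true)], by simp [ev]⟩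
    | one => exact ⟨[], by simp⟩
    | mul x y hx hy ihx ihy =>
        rcases ihx with ⟨l1, h1⟩; rcases ihy with ⟨l2, h2⟩
        exact ⟨l1 ++ l2, by simp [h1, h2]⟩
    | inv x hx ih =>
        rcases ih with ⟨l, hl⟩
        refine ⟨l.reverse.map fun p => (p.1, !p.2), ?_⟩
        have h1 : (fun p : s × Bool => ev (p.1, !p.2)) = fun p => (ev p)⁻¹ := by
          funext p
          rcases p with ⟨x, b⟩
          cases b <;> simp [ev]
        rw [List.map_map]
        show ((l.reverse.map fun p => ev (p.1, !p.2))).prod = x⁻¹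
        rw [h1, List.map_reverse,
          show (fun p : s × Bool => (ev p)⁻¹) = (fun x => x⁻¹) ∘ ev from rfl,
          ← List.map_map, ← hl]
        exact (List.prod_inv_reverse _).symm
  have hsurj : Function.Surjective
      (fun l : List (s × Bool) => (⟨(l.map ev).prod, Subgroup.list_prod_mem _ (by
        intro x hx
        rcases List.mem_map.mp hx with ⟨p, _, rfl⟩
        exact hevmem p)⟩ : Subgroup.closure s)) := by
    rintro ⟨g, hg⟩
    rcases hmem g hg with ⟨l, hl⟩
    exact ⟨l, Subtype.ext hl⟩
  have h1 := Cardinal.mk_le_of_surjective hsurj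
  refine h1.trans ?_
  refine (Cardinal.mk_list_le_max _).trans ?_
  have h2 : Cardinal.mk (s × Bool) ≤ max Cardinal.aleph0 (Cardinal.mk s) := by
    rw [Cardinal.mk_prod, Cardinal.lift_id, Cardinal.lift_id]
    have : Cardinal.mk Bool ≤ Cardinal.aleph0 := (Cardinal.lt_aleph0_of_finite Bool).le
    calc Cardinal.mk s * Cardinal.mk Bool
        ≤ max Cardinal.aleph0 (Cardinal.mk s) * max Cardinal.aleph0 (Cardinal.mk s) :=
          mul_le_mul' (le_max_right _ _) (this.trans (le_max_left _ _))
      _ = max Cardinal.aleph0 (Cardinal.mk s) := Cardinal.mul_eq_self (le_max_left _ _)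
  exact max_le (le_max_left _ _) (h2.trans le_rfl)

lemma aux_subgroup_eq_of_le_of_card_le {G : Type} [Group G] {H K : Subgroup G} [Finite ↥K]
    (hle : H ≤ K) (hcard : Nat.card ↥K ≤ Nat.card ↥H) : H = K := by
  apply SetLike.coe_injective
  refine Set.eq_of_subset_of_ncard_le hle ?_ (K : Set G).toFinite
  rwa [← Nat.card_coe_set_eq, ← Nat.card_coe_set_eq]

lemma aux_card_pi {ι : Type} [Fintype ι] {Gi : Type} [Group Gi] (K : Subgroup Gi) :
    Nat.card (Subgroup.pi Set.univ (fun _ : ι => K)) = ∏ _i : ι, Nat.card K := by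
  rw [← Nat.card_pi]
  refine Nat.card_congr ⟨fun p i => ⟨p.1 i, (Subgroup.mem_pi _).mp p.2 i (Set.mem_univ i)⟩,
    fun v => ⟨fun i => v i, (Subgroup.mem_pi _).mpr fun i _ => (v i).2⟩, fun p => ?_, fun v => ?_⟩
  · exact Subtype.ext rfl
  · funext i; exact Subtype.ext rfl

section Rank
variable {F : Type} [Group F] [TopologicalSpace F] [IsTopologicalGroup F] [CompactSpace F]
  {M : Subgroup F} {m : Cardinal}

lemma aux_rank_lb (hMopen : IsOpen (M : Set F)) (hm : Cardinal.aleph0 ≤ m)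
    (hrF : ∀ s : Set F, (Subgroup.closure s).topologicalClosure = ⊤ → m ≤ Cardinal.mk s)
    (s : Set ↥M) (hs : (Subgroup.closure s).topologicalClosure = ⊤) :
    m ≤ Cardinal.mk s := by
  have hfin : Finite (F ⧸ M) := Subgroup.quotient_finite_of_isOpen M hMopen
  set T : Set F := Set.range (fun q : F ⧸ M => q.out) with hT
  set s' : Set F := (Subtype.val '' s) ∪ T with hs'
  have hdense : Dense ((Subgroup.closure s : Subgroup ↥M) : Set ↥M) :=
    (aux_topClosure_eq_top_iff_dense _).mp hs
  have hgen : (Subgroup.closure s').topologicalClosure = ⊤ := by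
    set C := (Subgroup.closure s').topologicalClosure with hC
    rw [eq_top_iff]
    have hsub1 : (Subtype.val '' ((Subgroup.closure s : Subgroup ↥M) : Set ↥M))
        ⊆ (Subgroup.closure s' : Set F) := by
      have hmap : (Subgroup.closure s).map M.subtype ≤ Subgroup.closure s' := by
        rw [MonoidHom.map_closure]
        exact Subgroup.closure_mono Set.subset_union_left
      rw [show (Subtype.val : ↥M → F) = ⇑M.subtype from rfl,
        ← Subgroup.coe_map M.subtype (Subgroup.closure s)]
      exact SetLike.coe_subset_coe.mpr hmap
    have hMsub : (M : Set F) ⊆ (C : Set F) := by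
      intro x hx
      have h1 : (⟨x, hx⟩ : ↥M) ∈ closure ((Subgroup.closure s : Subgroup ↥M) : Set ↥M) := by
        rw [hdense.closure_eq]; trivial
      have h2 : x ∈ closure (Subtype.val '' ((Subgroup.closure s : Subgroup ↥M) : Set ↥M)) :=
        image_closure_subset_closure_image continuous_subtype_val ⟨⟨x, hx⟩, h1, rfl⟩
      have h3 : closure (Subtype.val '' ((Subgroup.closure s : Subgroup ↥M) : Set ↥M))
          ⊆ (C : Set F) := by
        rw [hC, Subgroup.topologicalClosure_coe]
        exact closure_mono hsub1
      exact h3 h2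
    have hTsub : T ⊆ (C : Set F) := fun x hx =>
      subset_closure (Subgroup.subset_closure (Set.mem_union_right _ hx))
    intro g _
    have h4 : ((g : F ⧸ M).out)⁻¹ * g ∈ M := QuotientGroup.eq.mp (QuotientGroup.out_eq' _)
    have h5 : (g : F ⧸ M).out ∈ C := hTsub ⟨_, rfl⟩
    have h6 : ((g : F ⧸ M).out)⁻¹ * g ∈ C := hMsub h4
    simpa using mul_mem h5 h6
  have h1 : m ≤ Cardinal.mk s' := hrF s' hgen
  by_contra hcon
  push_neg at hcon
  have hTlt : Cardinal.mk T < Cardinal.aleph0 := Cardinal.lt_aleph0_of_finite _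
  have h2 : Cardinal.mk s' ≤ Cardinal.mk (Subtype.val '' s) + Cardinal.mk T :=
    Cardinal.mk_union_le _ _
  have h3 : Cardinal.mk (Subtype.val '' s) = Cardinal.mk s :=
    Cardinal.mk_image_eq Subtype.coe_injective
  have h4 : Cardinal.mk (Subtype.val '' s) + Cardinal.mk T < m := by
    rw [h3]
    exact Cardinal.add_lt_of_lt hm hcon (hTlt.trans_le hm)
  exact h4.not_ge (h1.trans h2)

lemma aux_rank (hMopen : IsOpen (M : Set F)) (hm : Cardinal.aleph0 ≤ m)
    (hrank : HasProfiniteRank F m) : HasProfiniteRank ↥M m := by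
  obtain ⟨⟨s₀, hs₀card, hs₀gen⟩, hmin⟩ := hrank
  refine ⟨?_, fun s hs => aux_rank_lb hMopen hm hmin s hs⟩
  set D : Subgroup ↥M := (Subgroup.closure s₀).comap M.subtype with hD
  set sM : Set ↥M := (D : Set ↥M) with hsM
  have hdenseF : Dense ((Subgroup.closure s₀ : Subgroup F) : Set F) :=
    (aux_topClosure_eq_top_iff_dense _).mp hs₀gen
  have hdense : Dense sM := by
    rw [dense_iff_inter_open]
    rintro U hU ⟨x, hxU⟩
    rcases isOpen_induced_iff.mp hU with ⟨V, hV, rfl⟩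
    have hVM : IsOpen (V ∩ (M : Set F)) := hV.inter hMopen
    have hne : (V ∩ (M : Set F)).Nonempty := ⟨x, hxU, x.2⟩
    rcases hdenseF.inter_open_nonempty _ hVM hne with ⟨d, ⟨hdV, hdM⟩, hdD⟩
    exact ⟨⟨d, hdM⟩, hdV, hdD⟩
  have hgen : (Subgroup.closure sM).topologicalClosure = ⊤ := by
    rw [hsM, Subgroup.closure_eq, aux_topClosure_eq_top_iff_dense]
    exact hdense
  have hub : Cardinal.mk sM ≤ m := by
    have hinj : Function.Injective (fun x : sM => (⟨((x : ↥M) : F), x.2⟩ : Subgroup.closure s₀)) := by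
      intro a b hab
      have h2 := congrArg Subtype.val hab
      exact Subtype.ext (Subtype.ext h2)
    have h1 : Cardinal.mk sM ≤ Cardinal.mk (Subgroup.closure s₀) :=
      Cardinal.mk_le_of_injective hinj
    refine h1.trans ((aux_mk_closure_le s₀).trans ?_)
    rw [hs₀card]
    exact max_le hm le_rfl
  have hlb : m ≤ Cardinal.mk sM := aux_rank_lb hMopen hm hmin sM hgen
  exact ⟨sM, le_antisymm hub hlb, hgen⟩
end Rank

section WP
variable {F G H D : Type} [Group F] [Group G] [Group H] [Group D]

/-- Left translation action of `D` on `D → H`. -/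
def wpAct (D H : Type) [Group D] [Group H] : D →* MulAut (D → H) where
  toFun d :=
  { toFun := fun f σ => f (d⁻¹ * σ)
    invFun := fun f σ => f (d * σ)
    left_inv := fun f => by
      funext σ
      show f (d⁻¹ * (d * σ)) = f σ
      rw [← mul_assoc, inv_mul_cancel, one_mul]
    right_inv := fun f => by
      funext σ
      show f (d * (d⁻¹ * σ)) = f σ
      rw [← mul_assoc, mul_inv_cancel, one_mul]
    map_mul' := fun f g => rfl }
  map_one' := by
    ext f σ
    show f (1⁻¹ * σ) = f σ
    rw [inv_one, one_mul]
  map_mul' := fun d₁ d₂ => by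
    ext f σ
    show f ((d₁ * d₂)⁻¹ * σ) = f (d₂⁻¹ * (d₁⁻¹ * σ))
    rw [mul_inv_rev, mul_assoc]

lemma wpAct_apply (d : D) (f : D → H) (σ : D) : wpAct D H d f σ = f (d⁻¹ * σ) := rfl

variable (M : Subgroup F) (φ : ↥M →* G) (α : H →* G) (sec : G →* H) (π : F →* D)

/-- The induced twisted wreath-product-like subgroup. -/
def wpW : Subgroup ((D → H) ⋊[wpAct D H] D) where
  carrier := {p | (∀ σ : D, α (p.left σ) = 1) ∧
    ∀ (σ : D) (x : ↥M), p.left (σ * π ↑x) = (sec (φ x))⁻¹ * p.left σ * sec (φ x)}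
  one_mem' := by
    constructor
    · intro σ; show α ((1 : D → H) σ) = 1; simp
    · intro σ x; show (1 : D → H) _ = _ * (1 : D → H) σ * _; simp
  mul_mem' := by
    rintro p q ⟨hp1, hp2⟩ ⟨hq1, hq2⟩
    constructor
    · intro σ
      show α (p.left σ * wpAct D H p.right q.left σ) = 1
      rw [map_mul, hp1, wpAct_apply, hq1, one_mul]
    · intro σ x
      show p.left (σ * π ↑x) * wpAct D H p.right q.left (σ * π ↑x)
        = _ * (p.left σ * wpAct D H p.right q.left σ) * _
      rw [wpAct_apply, wpAct_apply, hp2,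
        show p.right⁻¹ * (σ * π ↑x) = (p.right⁻¹ * σ) * π ↑x from (mul_assoc _ _ _).symm, hq2]
      group
  inv_mem' := by
    rintro p ⟨hp1, hp2⟩
    constructor
    · intro σ
      show α ((wpAct D H p.right⁻¹ p.left⁻¹) σ) = 1
      rw [wpAct_apply]
      show α ((p.left (p.right⁻¹⁻¹ * σ))⁻¹) = 1
      rw [map_inv, hp1, inv_one]
    · intro σ x
      show (wpAct D H p.right⁻¹ p.left⁻¹) (σ * π ↑x)
        = _ * (wpAct D H p.right⁻¹ p.left⁻¹) σ * _
      rw [wpAct_apply, wpAct_apply]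
      show (p.left (p.right⁻¹⁻¹ * (σ * π ↑x)))⁻¹ = _ * (p.left (p.right⁻¹⁻¹ * σ))⁻¹ * _
      rw [← mul_assoc, hp2]
      group

/-- The projection of `wpW` to `D`. -/
def wpβ : ↥(wpW M φ α sec π) →* D :=
  SemidirectProduct.rightHom.comp (wpW M φ α sec π).subtype

lemma wpβ_apply (w : ↥(wpW M φ α sec π)) :
    wpβ M φ α sec π w = (w : (D → H) ⋊[wpAct D H] D).right := rfl

/-- The canonical section of `wpβ`. -/
def wpSec : D →* ↥(wpW M φ α sec π) where
  toFun d := ⟨⟨1, d⟩, by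
    constructor
    · intro σ; show α ((1 : D → H) σ) = 1; simp
    · intro σ x; show (1 : D → H) _ = _ * (1 : D → H) σ * _; simp⟩
  map_one' := rfl
  map_mul' := fun d₁ d₂ => by
    apply Subtype.ext
    apply SemidirectProduct.ext
    · show (1 : D → H) = 1 * wpAct D H d₁ 1
      rw [map_one, mul_one]
    · rfl

lemma wpβ_comp_wpSec : (wpβ M φ α sec π).comp (wpSec M φ α sec π) = MonoidHom.id D := rfl

open Classical in
/-- The standard equivariant function with prescribed value at `1`. -/
noncomputable def wpE (a : H) : D → H :=
  fun σ =>
    if h : ∃ x : ↥M, π ↑x = σ then (sec (φ h.choose))⁻¹ * a * sec (φ h.choose) else 1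

variable {M φ π}

lemma wpE_pos (a : H) {σ : D} (h : ∃ x : ↥M, π ↑x = σ) :
    wpE M φ sec π a σ = (sec (φ h.choose))⁻¹ * a * sec (φ h.choose) := dif_pos h

lemma wpE_neg (a : H) {σ : D} (h : ¬ ∃ x : ↥M, π ↑x = σ) :
    wpE M φ sec π a σ = 1 := dif_neg h

lemma wpE_apply_pi (hwd : ∀ x y : ↥M, π ↑x = π ↑y → sec (φ x) = sec (φ y)) (a : H) (x : ↥M) :
    wpE M φ sec π a (π ↑x) = (sec (φ x))⁻¹ * a * sec (φ x) := by
  have hex : ∃ y : ↥M, π ↑y = π ↑x := ⟨x, rfl⟩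
  rw [wpE_pos sec a hex, hwd hex.choose x hex.choose_spec]

lemma wpE_apply_one (hwd : ∀ x y : ↥M, π ↑x = π ↑y → sec (φ x) = sec (φ y)) (a : H) : wpE M φ sec π a 1 = a := by
  have h1 : π ↑(1 : ↥M) = 1 := by rw [OneMemClass.coe_one, map_one]
  have h2 := wpE_apply_pi sec hwd a (1 : ↥M)
  rw [h1] at h2
  rw [h2, map_one, map_one, inv_one, one_mul, mul_one]

lemma wpE_mem (hwd : ∀ x y : ↥M, π ↑x = π ↑y → sec (φ x) = sec (φ y)) (a : H) (ha : α a = 1) :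
    (⟨wpE M φ sec π a, 1⟩ : (D → H) ⋊[wpAct D H] D) ∈ wpW M φ α sec π := by
  refine ⟨fun σ => ?_, fun σ x => ?_⟩
  · show α (wpE M φ sec π a σ) = 1
    by_cases h : ∃ x : ↥M, π ↑x = σ
    · rw [wpE_pos sec a h, map_mul, map_mul, map_inv, ha, mul_one, inv_mul_cancel]
    · rw [wpE_neg sec a h, map_one]
  · show wpE M φ sec π a (σ * π ↑x) = _ * wpE M φ sec π a σ * _
    by_cases h : ∃ y : ↥M, π ↑y = σ
    · rcases h with ⟨y, rfl⟩
      have h1 : π ↑y * π ↑x = π ↑(y * x) := by rw [MulMemClass.coe_mul, map_mul]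
      rw [h1, wpE_apply_pi sec hwd a (y * x), wpE_apply_pi sec hwd a y, map_mul, map_mul]
      group
    · have h2 : ¬ ∃ y : ↥M, π ↑y = σ * π ↑x := by
        rintro ⟨y, hy⟩
        refine h ⟨y * x⁻¹, ?_⟩
        rw [MulMemClass.coe_mul, map_mul, hy, InvMemClass.coe_inv, map_inv, mul_assoc,
          mul_inv_cancel, mul_one]
      rw [wpE_neg sec a h2, wpE_neg sec a h, mul_one, inv_mul_cancel]

/-- Restriction of a solution of the induced problem to `M`. -/
noncomputable def wpRes (Ψ : F →* ↥(wpW M φ α sec π))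
    (hΨ : (wpβ M φ α sec π).comp Ψ = π) : ↥M →* H where
  toFun x := ((Ψ ↑x : ↥(wpW M φ α sec π)) : (D → H) ⋊[wpAct D H] D).left 1 * sec (φ x)
  map_one' := by
    show ((Ψ ↑(1 : ↥M) : ↥(wpW M φ α sec π)) : (D → H) ⋊[wpAct D H] D).left 1 * sec (φ 1) = 1
    rw [map_one φ, map_one sec, mul_one, OneMemClass.coe_one, map_one Ψ, OneMemClass.coe_one,
      SemidirectProduct.one_left]
    rfl
  map_mul' := by
    intro x y
    show ((Ψ ↑(x * y) : ↥(wpW M φ α sec π)) : (D → H) ⋊[wpAct D H] D).left 1 * sec (φ (x * y))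
      = (((Ψ ↑x : ↥(wpW M φ α sec π)) : (D → H) ⋊[wpAct D H] D).left 1 * sec (φ x))
        * (((Ψ ↑y : ↥(wpW M φ α sec π)) : (D → H) ⋊[wpAct D H] D).left 1 * sec (φ y))
    have hR : ((Ψ ↑x : ↥(wpW M φ α sec π)) : (D → H) ⋊[wpAct D H] D).right = π ↑x :=
      DFunLike.congr_fun hΨ (↑x : F)
    have hmul : ((Ψ ↑(x * y) : ↥(wpW M φ α sec π)) : (D → H) ⋊[wpAct D H] D)
        = ((Ψ ↑x : ↥(wpW M φ α sec π)) : (D → H) ⋊[wpAct D H] D)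
          * ((Ψ ↑y : ↥(wpW M φ α sec π)) : (D → H) ⋊[wpAct D H] D) := by
      rw [MulMemClass.coe_mul, map_mul]
      rfl
    have hq2 := ((Ψ ↑y).2 : _ ∧ _).2
    rw [hmul, SemidirectProduct.mul_left, Pi.mul_apply, wpAct_apply, hR,
      show (π ↑x)⁻¹ * (1 : D) = 1 * π ↑(x⁻¹ : ↥M) by
        rw [InvMemClass.coe_inv, map_inv, mul_one, one_mul],
      hq2 1 x⁻¹, map_mul φ, map_mul sec, map_inv φ, map_inv sec]
    group

lemma wpW_mem_iff (M : Subgroup F) (φ : ↥M →* G) (α : H →* G) (sec : G →* H) (π : F →* D)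
    (p : (D → H) ⋊[wpAct D H] D) :
    p ∈ wpW M φ α sec π ↔ (∀ σ : D, α (p.left σ) = 1) ∧
    ∀ (σ : D) (x : ↥M), p.left (σ * π ↑x) = (sec (φ x))⁻¹ * p.left σ * sec (φ x) := Iff.rfl

lemma wpSec_coe (M : Subgroup F) (φ : ↥M →* G) (α : H →* G) (sec : G →* H) (π : F →* D) (d : D) :
    ((wpSec M φ α sec π d : ↥(wpW M φ α sec π)) : (D → H) ⋊[wpAct D H] D) = ⟨1, d⟩ := rfl

lemma wpRes_apply {M : Subgroup F} {φ : ↥M →* G} (α : H →* G) (sec : G →* H) {π : F →* D}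
    (Ψ : F →* ↥(wpW M φ α sec π)) (hΨ : (wpβ M φ α sec π).comp Ψ = π) (x : ↥M) :
    wpRes α sec Ψ hΨ x
      = ((Ψ ↑x : ↥(wpW M φ α sec π)) : (D → H) ⋊[wpAct D H] D).left 1 * sec (φ x) := rfl
end WP

lemma aux_semifree {F : Type} [Group F] [TopologicalSpace F] [IsTopologicalGroup F]
    [CompactSpace F] {m : Cardinal} (hsf : IsSemiFree F m)
    {M : Subgroup F} (hMopen : IsOpen (M : Set F)) : IsSemiFree ↥M m := by
  classical
  intro G H _ _ _ _ φ α hφopen hφsurj hαsurj hsplit hαnotbij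
  obtain ⟨sec, hsec⟩ := hsplit
  have hαsec : ∀ g : G, α (sec g) = g := fun g => DFunLike.congr_fun hsec g
  -- the open normal subgroup N
  have hK₀open : IsOpen ((φ.ker.map M.subtype : Subgroup F) : Set F) := by
    have h1 : ((φ.ker.map M.subtype : Subgroup F) : Set F)
        = Subtype.val '' (φ.ker : Set ↥M) := by
      rw [Subgroup.coe_map]; rfl
    rw [h1]
    exact hMopen.isOpenMap_subtype_val _ hφopen
  haveI hK₀fin : (φ.ker.map M.subtype).FiniteIndex := by
    haveI := Subgroup.quotient_finite_of_isOpen _ hK₀open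
    exact Subgroup.finiteIndex_of_finite_quotient (H := φ.ker.map M.subtype)
  set N : Subgroup F := (φ.ker.map M.subtype).normalCore with hNdef
  haveI hNnorm : N.Normal := Subgroup.normalCore_normal _
  haveI hNfin : N.FiniteIndex := Subgroup.finiteIndex_normalCore _
  have hNopen : IsOpen (N : Set F) :=
    Subgroup.isOpen_of_isClosed_of_finiteIndex _
      (Subgroup.normalCore_isClosed _ ((φ.ker.map M.subtype).isClosed_of_isOpen hK₀open))
  have hNle : N ≤ φ.ker.map M.subtype := Subgroup.normalCore_le _
  have hNleM : N ≤ M := hNle.trans (Subgroup.map_subtype_le _)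
  have hNker : ∀ x : ↥M, (x : F) ∈ N → φ x = 1 := by
    intro x hx
    rcases Subgroup.mem_map.mp (hNle hx) with ⟨z, hz, hzx⟩
    have hzx' : z = x := Subtype.ext hzx
    rw [← hzx']; exact hz
  haveI hDfin : Finite (F ⧸ N) := Subgroup.finite_quotient_of_finiteIndex (H := N)
  set π : F →* F ⧸ N := QuotientGroup.mk' N with hπdef
  have hπker : π.ker = N := QuotientGroup.ker_mk' N
  have hπsurj : Function.Surjective π := QuotientGroup.mk'_surjective N
  have hπopen : IsOpen (π.ker : Set F) := by rw [hπker]; exact hNopen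
  have hwd : ∀ x y : ↥M, π ↑x = π ↑y → sec (φ x) = sec (φ y) := by
    intro x y hxy
    have hmem : ((x⁻¹ * y : ↥M) : F) ∈ N := by
      rw [← hπker]
      apply MonoidHom.mem_ker.mpr
      rw [MulMemClass.coe_mul, InvMemClass.coe_inv, map_mul, map_inv, hxy, inv_mul_cancel]
    have h1 : φ (x⁻¹ * y) = 1 := hNker _ hmem
    have h2 : φ y = φ x := by
      rw [map_mul, map_inv, inv_mul_eq_one] at h1; exact h1.symm
    rw [h2]
  -- the induced embedding problem for F
  haveI hSDPfin : Finite ((F ⧸ N → H) ⋊[wpAct (F ⧸ N) H] (F ⧸ N)) :=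
    Finite.of_injective (fun p => (p.left, p.right))
      (fun p q h => SemidirectProduct.ext (congrArg Prod.fst h) (congrArg Prod.snd h))
  have hβsurj : Function.Surjective (wpβ M φ α sec π) := by
    intro d
    refine ⟨wpSec M φ α sec π d, ?_⟩
    rw [wpβ_apply, wpSec_coe]
  have hβsplit : ∃ s : (F ⧸ N) →* ↥(wpW M φ α sec π),
      (wpβ M φ α sec π).comp s = MonoidHom.id (F ⧸ N) :=
    ⟨wpSec M φ α sec π, wpβ_comp_wpSec M φ α sec π⟩
  obtain ⟨a₀, ha₀, ha₀ne⟩ : ∃ a : H, α a = 1 ∧ a ≠ 1 := by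
    have hninj : ¬ Function.Injective α := fun hinj => hαnotbij ⟨hinj, hαsurj⟩
    rw [Function.not_injective_iff] at hninj
    obtain ⟨a, b, hab, hne⟩ := hninj
    refine ⟨a * b⁻¹, by rw [map_mul, map_inv, hab, mul_inv_cancel], fun h => hne ?_⟩
    rwa [mul_inv_eq_one] at h
  have hβnotbij : ¬ Function.Bijective (wpβ M φ α sec π) := by
    rintro ⟨hinj, -⟩
    set w₀ : ↥(wpW M φ α sec π) := ⟨⟨wpE M φ sec π a₀, 1⟩, wpE_mem α sec hwd a₀ ha₀⟩ with hw₀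
    have h1 : wpβ M φ α sec π w₀ = wpβ M φ α sec π 1 := by
      rw [map_one, wpβ_apply, hw₀]
    have h2 := hinj h1
    have h3 : wpE M φ sec π a₀ 1
        = ((1 : ↥(wpW M φ α sec π)) : (F ⧸ N → H) ⋊[wpAct (F ⧸ N) H] (F ⧸ N)).left 1 := by
      rw [← h2]
    rw [wpE_apply_one sec hwd a₀, OneMemClass.coe_one, SemidirectProduct.one_left] at h3
    exact ha₀ne h3
  obtain ⟨S, hScard, hSsol, hSind⟩ :=
    hsf (F ⧸ N) ↥(wpW M φ α sec π) π (wpβ M φ α sec π) hπopen hπsurj hβsurj hβsplit hβnotbij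
  -- every solution maps the kernel onto the kernel
  have hSker : ∀ Ψ, Ψ ∈ S → π.ker.map Ψ = (wpβ M φ α sec π).ker := by
    intro Ψ hΨ
    obtain ⟨hop, hcomp, hsurj⟩ := hSsol Ψ hΨ
    apply le_antisymm
    · rintro w ⟨g, hg, rfl⟩
      have h1 : (wpβ M φ α sec π) (Ψ g) = π g := DFunLike.congr_fun hcomp g
      rw [MonoidHom.mem_ker, h1]
      exact MonoidHom.mem_ker.mp hg
    · intro w hw
      obtain ⟨g, rfl⟩ := hsurj w
      have h1 : π g = 1 := by
        rw [← DFunLike.congr_fun hcomp g]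
        exact MonoidHom.mem_ker.mp hw
      exact ⟨g, MonoidHom.mem_ker.mpr h1, rfl⟩
  -- joint surjectivity on the F-side
  have hjoint : ∀ (ι : Type) [Fintype ι] (Ψf : ι → (F →* ↥(wpW M φ α sec π))),
      Function.Injective Ψf → (∀ i, Ψf i ∈ S) →
      ∀ w : ι → ↥(wpW M φ α sec π), (∀ i, wpβ M φ α sec π (w i) = 1) →
      ∃ g : F, g ∈ π.ker ∧ ∀ i, Ψf i g = w i := by
    intro ι _ Ψf hinj hmem w hw
    set JW : F →* (ι → ↥(wpW M φ α sec π)) :=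
      { toFun := fun g i => Ψf i g
        map_one' := by funext i; show Ψf i 1 = 1; rw [map_one]
        map_mul' := fun g₁ g₂ => by
          funext i; show Ψf i (g₁ * g₂) = (fun j => Ψf j g₁) i * (fun j => Ψf j g₂) i
          rw [map_mul] } with hJW
    set PiK : Subgroup (ι → ↥(wpW M φ α sec π)) :=
      Subgroup.pi Set.univ (fun _ => (wpβ M φ α sec π).ker) with hPiK
    have hle : π.ker.map JW ≤ PiK := by
      rintro _ ⟨g, hg, rfl⟩
      refine (Subgroup.mem_pi _).mpr fun i _ => ?_
      rw [MonoidHom.mem_ker]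
      have h1 : wpβ M φ α sec π (Ψf i g) = π g := DFunLike.congr_fun (hSsol _ (hmem i)).2.1 g
      rw [show JW g i = Ψf i g from rfl, h1]
      exact MonoidHom.mem_ker.mp hg
    set t'' : Finset (F →* ↥(wpW M φ α sec π)) := Finset.univ.image Ψf with ht''
    have hsub : ↑t'' ⊆ S := by
      intro Ψ hΨ
      rcases Finset.mem_image.mp (Finset.mem_coe.mp hΨ) with ⟨i, -, rfl⟩
      exact hmem i
    have hind := hSind t'' hsub
    have hkerEq : (⨅ Ψ ∈ t'', (Ψ : F →* ↥(wpW M φ α sec π)).ker) = JW.ker := by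
      ext g
      rw [Subgroup.mem_iInf]
      constructor
      · intro h
        rw [MonoidHom.mem_ker]
        funext i
        exact MonoidHom.mem_ker.mp
          (Subgroup.mem_iInf.mp (h (Ψf i)) (Finset.mem_image_of_mem Ψf (Finset.mem_univ i)))
      · intro h Ψ
        rw [Subgroup.mem_iInf]
        intro hΨ
        rcases Finset.mem_image.mp hΨ with ⟨i, -, rfl⟩
        exact MonoidHom.mem_ker.mpr (congrFun (MonoidHom.mem_ker.mp h) i)
    have hcard1 : Nat.card (π.ker.map JW) = ∏ _i : ι, Nat.card ((wpβ M φ α sec π).ker) := by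
      rw [← Subgroup.relIndex_ker, ← hkerEq, hind, ht'',
        Finset.prod_image (fun i _ j _ h => hinj h)]
      refine Finset.prod_congr rfl fun i _ => ?_
      rw [Subgroup.relIndex_ker, hSker _ (hmem i)]
    have hcard2 : Nat.card PiK = ∏ _i : ι, Nat.card ((wpβ M φ α sec π).ker) := aux_card_pi _
    have heq : π.ker.map JW = PiK :=
      aux_subgroup_eq_of_le_of_card_le hle (by rw [hcard1, hcard2])
    have hwmem : w ∈ PiK := (Subgroup.mem_pi _).mpr fun i _ => MonoidHom.mem_ker.mpr (hw i)
    rw [← heq] at hwmem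
    rcases hwmem with ⟨g, hg, hgw⟩
    exact ⟨g, hg, fun i => congrFun hgw i⟩
  -- joint surjectivity on the M-side
  have hjoint2 : ∀ (ι : Type) [Fintype ι] (Ψf : ι → (F →* ↥(wpW M φ α sec π))),
      Function.Injective Ψf → (∀ i, Ψf i ∈ S) →
      ∀ a : ι → H, (∀ i, α (a i) = 1) →
      ∃ x : ↥M, φ x = 1 ∧ ∀ i,
        ((Ψf i ↑x : ↥(wpW M φ α sec π)) : (F ⧸ N → H) ⋊[wpAct (F ⧸ N) H] (F ⧸ N)).left 1
          * sec (φ x) = a i := by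
    intro ι _ Ψf hinj hmem a ha
    set w : ι → ↥(wpW M φ α sec π) :=
      fun i => ⟨⟨wpE M φ sec π (a i), 1⟩, wpE_mem α sec hwd (a i) (ha i)⟩ with hwdef
    have hw : ∀ i, wpβ M φ α sec π (w i) = 1 := fun i => by rw [wpβ_apply, hwdef]
    obtain ⟨g, hg, hgw⟩ := hjoint ι Ψf hinj hmem w hw
    have hgN : g ∈ N := hπker ▸ hg
    set x : ↥M := ⟨g, hNleM hgN⟩ with hx
    have hxg : (↑x : F) = g := rfl
    have hφx : φ x = 1 := hNker x hgN
    refine ⟨x, hφx, fun i => ?_⟩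
    rw [hφx, map_one, mul_one, hxg, hgw i, hwdef]
    exact wpE_apply_one sec hwd (a i)
  -- the solution set
  set Θ : ↥S → (↥M →* H) :=
    fun Ψp => wpRes α sec Ψp.1 (hSsol _ Ψp.2).2.1 with hΘ
  have hΘcomp : ∀ Ψp : ↥S, α.comp (Θ Ψp) = φ := by
    intro Ψp
    ext x
    rw [MonoidHom.comp_apply, hΘ, wpRes_apply, map_mul, hαsec]
    have h1 := ((wpW_mem_iff M φ α sec π _).mp (Ψp.1 ↑x).2).1 1
    rw [h1, one_mul]
  have hΘopen : ∀ Ψp : ↥S, IsOpen ((Θ Ψp).ker : Set ↥M) := by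
    intro Ψp
    obtain ⟨hop, hcomp, hsurj⟩ := hSsol _ Ψp.2
    have hle : Ψp.1.ker.comap M.subtype ≤ (Θ Ψp).ker := by
      intro x hx
      have h1 : Ψp.1 ↑x = 1 := MonoidHom.mem_ker.mp (Subgroup.mem_comap.mp hx)
      rw [MonoidHom.mem_ker, hΘ, wpRes_apply]
      have hπx : π ↑x = 1 := by
        have hc : wpβ M φ α sec π (Ψp.1 ↑x) = π ↑x := DFunLike.congr_fun hcomp (↑x : F)
        rw [← hc, h1, map_one]
      have hφx : φ x = 1 := hNker x (hπker ▸ MonoidHom.mem_ker.mpr hπx)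
      rw [h1, hφx, map_one, mul_one, OneMemClass.coe_one, SemidirectProduct.one_left]
      rfl
    apply Subgroup.isOpen_mono hle
    exact hop.preimage continuous_subtype_val
  have hΘsurj : ∀ Ψp : ↥S, Function.Surjective (Θ Ψp) := by
    intro Ψp h₀
    obtain ⟨g₀, hg₀⟩ := hφsurj (α h₀)
    have h1 : α (h₀ * (Θ Ψp g₀)⁻¹) = 1 := by
      have hc : α (Θ Ψp g₀) = φ g₀ := DFunLike.congr_fun (hΘcomp Ψp) g₀
      rw [map_mul, map_inv, hc, hg₀, mul_inv_cancel]
    obtain ⟨x, hφx, hx⟩ := hjoint2 PUnit (fun _ => Ψp.1)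
      (fun _ _ _ => Subsingleton.elim _ _) (fun _ => Ψp.2)
      (fun _ => h₀ * (Θ Ψp g₀)⁻¹) (fun _ => h1)
    refine ⟨x * g₀, ?_⟩
    have hx' : Θ Ψp x = h₀ * (Θ Ψp g₀)⁻¹ := by
      rw [hΘ, wpRes_apply]
      exact hx PUnit.unit
    rw [map_mul, hx', inv_mul_cancel_right]
  have hΘinj : Function.Injective Θ := by
    intro Ψ₁ Ψ₂ h12
    by_contra hne
    have hvne : Ψ₁.1 ≠ Ψ₂.1 := fun h => hne (Subtype.ext h)
    set Ψf : Bool → (F →* ↥(wpW M φ α sec π)) :=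
      fun b => match b with | true => Ψ₁.1 | false => Ψ₂.1 with hΨf
    have hinj : Function.Injective Ψf := by
      intro b c hbc
      cases b <;> cases c <;> first
        | rfl
        | exact absurd hbc.symm hvne
        | exact absurd hbc hvne
    have hmem : ∀ b, Ψf b ∈ S := by
      intro b; cases b
      · exact Ψ₂.2
      · exact Ψ₁.2
    set a : Bool → H := fun b => match b with | true => a₀ | false => 1 with ha
    have haker : ∀ b, α (a b) = 1 := by
      intro b; cases b
      · exact map_one α
      · exact ha₀
    obtain ⟨x, hφx, hx⟩ := hjoint2 Bool Ψf hinj hmem a haker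
    have e1 : Θ Ψ₁ x = a₀ := by
      rw [hΘ, wpRes_apply]; exact hx true
    have e2 : Θ Ψ₂ x = 1 := by
      rw [hΘ, wpRes_apply]; exact hx false
    rw [h12, e2] at e1
    exact ha₀ne e1.symm
  refine ⟨Set.range Θ, ?_, ?_, ?_⟩
  · rw [Cardinal.mk_range_eq Θ hΘinj]
    exact hScard
  · rintro ψ ⟨Ψp, rfl⟩
    exact ⟨hΘopen Ψp, hΘcomp Ψp, hΘsurj Ψp⟩
  · intro t ht
    have hc : ∀ i : {ψ : ↥M →* H // ψ ∈ t}, ∃ Ψp : ↥S, Θ Ψp = i.1 := fun i => ht i.2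
    choose c hcspec using hc
    set Ψf : {ψ : ↥M →* H // ψ ∈ t} → (F →* ↥(wpW M φ α sec π)) := fun i => (c i).1 with hΨf
    have hmemf : ∀ i, Ψf i ∈ S := fun i => (c i).2
    have hinjf : Function.Injective Ψf := by
      intro i j hij
      have hcc : c i = c j := Subtype.ext hij
      have h1 : i.1 = j.1 := by rw [← hcspec i, ← hcspec j, hcc]
      exact Subtype.ext h1
    have hΘc : ∀ i : {ψ : ↥M →* H // ψ ∈ t}, ∀ x : ↥M, (i.1 : ↥M →* H) x
        = ((Ψf i ↑x : ↥(wpW M φ α sec π)) : (F ⧸ N → H) ⋊[wpAct (F ⧸ N) H] (F ⧸ N)).left 1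
          * sec (φ x) := by
      intro i x
      rw [← hcspec i, hΘ, wpRes_apply]
    set J : ↥M →* ({ψ : ↥M →* H // ψ ∈ t} → H) :=
      { toFun := fun x i => i.1 x
        map_one' := by funext i; show (i.1 : ↥M →* H) 1 = 1; rw [map_one]
        map_mul' := fun x y => by
          funext i
          show (i.1 : ↥M →* H) (x * y) = (fun j : {ψ : ↥M →* H // ψ ∈ t} => j.1 x) i
            * (fun j : {ψ : ↥M →* H // ψ ∈ t} => j.1 y) i
          rw [map_mul] } with hJ
    have hkerJ : (⨅ ψ ∈ t, (ψ : ↥M →* H).ker) = J.ker := by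
      ext x
      rw [Subgroup.mem_iInf]
      constructor
      · intro h
        rw [MonoidHom.mem_ker]
        funext i
        exact MonoidHom.mem_ker.mp (Subgroup.mem_iInf.mp (h i.1) i.2)
      · intro h ψ
        rw [Subgroup.mem_iInf]
        intro hψ
        exact MonoidHom.mem_ker.mpr (congrFun (MonoidHom.mem_ker.mp h) ⟨ψ, hψ⟩)
    have hmapJ : φ.ker.map J = Subgroup.pi Set.univ (fun _ : {ψ : ↥M →* H // ψ ∈ t} => α.ker) := by
      apply le_antisymm
      · rintro _ ⟨x, hx, rfl⟩
        refine (Subgroup.mem_pi _).mpr fun i _ => ?_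
        rw [MonoidHom.mem_ker]
        show α (i.1 x) = 1
        have h1 : α.comp (i.1 : ↥M →* H) = φ := by
          rw [← hcspec i]; exact hΘcomp (c i)
        rw [← MonoidHom.comp_apply, h1]
        exact MonoidHom.mem_ker.mp hx
      · intro v hv
        obtain ⟨x, hφx, hx⟩ := hjoint2 _ Ψf hinjf hmemf (fun i => v i)
          (fun i => MonoidHom.mem_ker.mp ((Subgroup.mem_pi _).mp hv i (Set.mem_univ i)))
        refine ⟨x, MonoidHom.mem_ker.mpr hφx, ?_⟩
        funext i
        show (i.1 : ↥M →* H) x = v i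
        rw [hΘc i x]
        exact hx i
    have hsing : ∀ ψ ∈ t, (ψ : ↥M →* H).ker.relIndex φ.ker = Nat.card ↥α.ker := by
      intro ψ hψ
      have hmap : φ.ker.map ψ = α.ker := by
        apply le_antisymm
        · rintro _ ⟨x, hx, rfl⟩
          rw [MonoidHom.mem_ker]
          have h1 : α.comp ψ = φ := by
            rw [show ψ = (⟨ψ, hψ⟩ : {ψ : ↥M →* H // ψ ∈ t}).1 from rfl, ← hcspec ⟨ψ, hψ⟩]
            exact hΘcomp (c ⟨ψ, hψ⟩)
          rw [← MonoidHom.comp_apply, h1]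
          exact MonoidHom.mem_ker.mp hx
        · intro b hb
          obtain ⟨x, hφx, hx⟩ := hjoint2 PUnit (fun _ => Ψf ⟨ψ, hψ⟩)
            (fun _ _ _ => Subsingleton.elim _ _) (fun _ => hmemf ⟨ψ, hψ⟩)
            (fun _ => b) (fun _ => MonoidHom.mem_ker.mp hb)
          refine ⟨x, MonoidHom.mem_ker.mpr hφx, ?_⟩
          rw [show ψ = (⟨ψ, hψ⟩ : {ψ : ↥M →* H // ψ ∈ t}).1 from rfl, hΘc ⟨ψ, hψ⟩ x]
          exact hx PUnit.unit
      rw [Subgroup.relIndex_ker, hmap]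
    have hLHS : (⨅ ψ ∈ t, (ψ : ↥M →* H).ker).relIndex φ.ker
        = ∏ _i : {ψ : ↥M →* H // ψ ∈ t}, Nat.card ↥α.ker := by
      rw [hkerJ, Subgroup.relIndex_ker, hmapJ, aux_card_pi]
    rw [hLHS, Finset.prod_congr rfl hsing, Finset.prod_const, Finset.prod_const,
      Finset.card_univ, Fintype.card_coe]

/-- An open subgroup `M` of a semi-free profinite group `F` of infinite rank `m` is semi-free
of rank `m`. -/
theorem stmt_15 (F : Type) [Group F] [TopologicalSpace F] [IsTopologicalGroup F]
    [CompactSpace F] [TotallyDisconnectedSpace F] [T2Space F]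
    (m : Cardinal) (hm : Cardinal.aleph0 ≤ m)
    (hrank : HasProfiniteRank F m) (hsf : IsSemiFree F m)
    (M : Subgroup F) (hMopen : IsOpen (M : Set F)) :
    HasProfiniteRank ↥M m ∧ IsSemiFree ↥M m :=
  ⟨aux_rank hMopen hm hrank, aux_semifree hsf hMopen⟩
end

section
/- Let M be a closed subgroup of infinite index in a profinite group F, and suppose the supernatural index (F : M) equals ∏_p p^{α(p)} where α(p) is finite for every prime p. Then M is sparse in F: for every natural number n there is an open subgroup K of F containing M such that every proper open subgroup L of K containing M satisfies (K : L) ≥ n. -/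
/-- If `M` is a closed subgroup of infinite index in a profinite group `F` whose supernatural
index `(F : M) = ∏ p^(α p)` has all exponents `α p` finite (i.e. for every prime `p` the power
of `p` dividing the index of any open subgroup of `F` containing `M` is bounded), then `M` is
sparse in `F`: for every `n` there is an open subgroup `K ≥ M` such that every proper open
subgroup `L` of `K` containing `M` satisfies `(K : L) ≥ n`. -/
theorem stmt_16 {F : Type*} [Group F] [TopologicalSpace F] [IsTopologicalGroup F]
    [CompactSpace F] [TotallyDisconnectedSpace F] [T2Space F]
    (M : Subgroup F) (hclosed : IsClosed (M : Set F)) (hinf : M.index = 0)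
    (hfin : ∀ p : ℕ, p.Prime → ∃ a : ℕ, ∀ L : Subgroup F, IsOpen (L : Set F) → M ≤ L →
      ¬ p ^ (a + 1) ∣ L.index) :
    ∀ n : ℕ, ∃ K : Subgroup F, IsOpen (K : Set F) ∧ M ≤ K ∧
      ∀ L : Subgroup F, IsOpen (L : Set F) → M ≤ L → L ≤ K → L ≠ K → n ≤ L.relIndex K := by
  classical
  intro n
  -- for each prime p, pick an open subgroup realizing the maximal p-power
  have key : ∀ p : ℕ, p.Prime → ∃ Lp : Subgroup F, IsOpen (Lp : Set F) ∧ M ≤ Lp ∧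
      ∀ L' : Subgroup F, IsOpen (L' : Set F) → M ≤ L' →
        ∀ b : ℕ, p ^ b ∣ L'.index → p ^ b ∣ Lp.index := by
    intro p hp
    obtain ⟨a, ha⟩ := hfin p hp
    set P : ℕ → Prop := fun b => ∃ L : Subgroup F, IsOpen (L : Set F) ∧ M ≤ L ∧ p ^ b ∣ L.index
      with hP
    have hP0 : P 0 := ⟨⊤, isOpen_univ, le_top, by simp⟩
    have hbdd : ∀ b, P b → b ≤ a := by
      rintro b ⟨L, hLo, hML, hdvd⟩
      by_contra h
      exact ha L hLo hML (dvd_trans (pow_dvd_pow p (by omega)) hdvd)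
    set b := Nat.findGreatest P a with hb
    have hPb : P b := Nat.findGreatest_spec (Nat.zero_le a) hP0
    obtain ⟨Lp, hLpo, hMLp, hdvd⟩ := hPb
    refine ⟨Lp, hLpo, hMLp, ?_⟩
    intro L' hL'o hML' c hc
    have hPc : P c := ⟨L', hL'o, hML', hc⟩
    have hcb : c ≤ b := Nat.le_findGreatest (hbdd c hPc) hPc
    exact dvd_trans (pow_dvd_pow p hcb) hdvd
  choose! Lfun hLopen hLle hLmax using key
  set S : Finset ℕ := (Finset.range (n + 1)).filter Nat.Prime with hS
  set K : Subgroup F := S.inf Lfun with hK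
  have hmemS : ∀ p ∈ S, p.Prime ∧ p ≤ n := by
    intro p hp
    rw [hS, Finset.mem_filter, Finset.mem_range] at hp
    exact ⟨hp.2, by omega⟩
  have hKcoe : (K : Set F) = ⋂ p ∈ S, (Lfun p : Set F) := by
    rw [hK, Finset.inf_eq_iInf]
    simp [Subgroup.coe_iInf]
  have hKopen : IsOpen (K : Set F) := by
    rw [hKcoe]
    exact isOpen_biInter_finset fun p hp => hLopen p (hmemS p hp).1
  have hMK : M ≤ K := Finset.le_inf fun p hp => hLle p (hmemS p hp).1
  refine ⟨K, hKopen, hMK, ?_⟩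
  intro L hLo hML hLK hne
  -- finite indices
  have hLfin : Finite (F ⧸ L) := Subgroup.quotient_finite_of_isOpen L hLo
  have hKfin : Finite (F ⧸ K) := Subgroup.quotient_finite_of_isOpen K hKopen
  have hLindex : L.index ≠ 0 := Subgroup.index_ne_zero_of_finite
  have hKindex : K.index ≠ 0 := Subgroup.index_ne_zero_of_finite
  set r := L.relIndex K with hr
  have hmul : r * K.index = L.index := Subgroup.relIndex_mul_index hLK
  have hr0 : r ≠ 0 := by
    intro h; rw [h, zero_mul] at hmul; exact hLindex hmul.symm
  have hr1 : r ≠ 1 := by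
    intro h
    exact hne (le_antisymm hLK (Subgroup.relIndex_eq_one.mp h))
  -- the least prime factor of r exceeds n
  set q := r.minFac with hq
  have hqp : q.Prime := Nat.minFac_prime hr1
  have hqr : q ∣ r := Nat.minFac_dvd r
  have hqn : n < q := by
    by_contra h
    push_neg at h
    have hqS : q ∈ S := by
      rw [hS, Finset.mem_filter, Finset.mem_range]
      exact ⟨by omega, hqp⟩
    -- maximal power of q dividing any open L' ≥ M
    obtain ⟨c, hc⟩ : ∃ c, q ^ c ∣ K.index ∧ ¬ q ^ (c + 1) ∣ (Lfun q).index := by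
      obtain ⟨a, ha⟩ := hfin q hqp
      set P : ℕ → Prop := fun c => q ^ c ∣ K.index with hP
      refine ⟨Nat.findGreatest P a, Nat.findGreatest_spec (P := P) (Nat.zero_le a) (show P 0 by simp [hP]), ?_⟩
      intro hdvd
      have hdvdK : q ^ (Nat.findGreatest P a + 1) ∣ K.index :=
        hLmax q hqp (Lfun q) (hLopen q hqp) (hLle q hqp) _ hdvd |>.trans
          (Subgroup.index_dvd_of_le (Finset.inf_le hqS))
      have hle : Nat.findGreatest P a + 1 ≤ a := by
        by_contra hcon
        push_neg at hcon
        exact ha (Lfun q) (hLopen q hqp) (hLle q hqp)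
          ((pow_dvd_pow q (by omega)).trans hdvd)
      exact absurd (Nat.le_findGreatest (P := P) hle hdvdK) (by omega)
    obtain ⟨hcK, hcL⟩ := hc
    -- q^(c+1) divides L.index, contradicting maximality at Lfun q
    have hdvdL : q ^ (c + 1) ∣ L.index := by
      rw [← hmul, pow_succ, mul_comm (q ^ c) q]
      exact mul_dvd_mul hqr hcK
    exact hcL (hLmax q hqp L hLo hML (c + 1) hdvdL)
  exact le_trans (le_of_lt hqn) (Nat.le_of_dvd (Nat.pos_of_ne_zero hr0) hqr)
end

section
/- Let M be a sparse closed subgroup of a profinite group F. Then for every pair of natural numbers ℓ, n there exists an open subgroup K of F containing M with (F : K) ≥ ℓ such that every proper open subgroup L of K containing M satisfies (K : L) ≥ n. -/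
/-- For `x ∉ M` with `M` closed, there is an open (normal) subgroup `N` with `x ∉ M ⊔ N`. -/
private lemma exists_avoid {F : Type*} [Group F] [TopologicalSpace F] [IsTopologicalGroup F]
    [CompactSpace F] [TotallyDisconnectedSpace F] [T2Space F]
    (M : Subgroup F) (hclosed : IsClosed (M : Set F)) {x : F} (hx : x ∉ M) :
    ∃ N : Subgroup F, IsOpen (N : Set F) ∧ x ∉ M ⊔ N := by
  have hMx : IsClosed ((fun g => g * x) '' (M : Set F)) :=
    (Homeomorph.mulRight x).isClosedMap _ hclosed
  have h1 : (1 : F) ∈ ((fun g => g * x) '' (M : Set F))ᶜ := by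
    rintro ⟨m, hm, hmx⟩
    have : m = x⁻¹ := eq_inv_of_mul_eq_one_left hmx
    exact hx (M.inv_mem_iff.mp (this ▸ hm))
  obtain ⟨W, hW, h1W, hWsub⟩ := compact_exists_isClopen_in_isOpen hMx.isOpen_compl h1
  obtain ⟨N, hN⟩ := IsTopologicalGroup.exist_openNormalSubgroup_sub_clopen_nhds_of_one hW h1W
  refine ⟨N.toSubgroup, N.toOpenSubgroup.isOpen, fun hxmem => ?_⟩
  haveI := N.isNormal'
  rw [← SetLike.mem_coe, Subgroup.mul_normal] at hxmem
  obtain ⟨m, hm, n, hn, rfl⟩ := hxmem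
  exact hWsub (hN hn) ⟨m⁻¹, M.inv_mem hm, by group⟩

private lemma exists_open_big {F : Type*} [Group F] [TopologicalSpace F] [IsTopologicalGroup F]
    [CompactSpace F] [TotallyDisconnectedSpace F] [T2Space F]
    (M : Subgroup F) (hclosed : IsClosed (M : Set F)) (hinf : M.index = 0) :
    ∀ ℓ : ℕ, ∃ U : Subgroup F, IsOpen (U : Set F) ∧ M ≤ U ∧ ℓ ≤ U.index := by
  intro ℓ
  induction ℓ with
  | zero => exact ⟨⊤, isOpen_univ, le_top, Nat.zero_le _⟩
  | succ ℓ ih =>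
    obtain ⟨U, hUo, hMU, hU⟩ := ih
    haveI : Finite (F ⧸ U) := U.quotient_finite_of_isOpen hUo
    have hUfin : U.index ≠ 0 := Subgroup.index_ne_zero_of_finite
    have hne : M ≠ U := by rintro rfl; exact hUfin hinf
    obtain ⟨x, hxU, hxM⟩ : ∃ x ∈ U, x ∉ M := by
      by_contra h
      push_neg at h
      exact hne (le_antisymm hMU fun x hxU => h x hxU)
    obtain ⟨N, hNo, hxN⟩ := exists_avoid M hclosed hxM
    set V : Subgroup F := U ⊓ (M ⊔ N) with hV
    have hVo : IsOpen (V : Set F) := hUo.inter (Subgroup.isOpen_mono le_sup_right hNo)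
    haveI : Finite (F ⧸ V) := V.quotient_finite_of_isOpen hVo
    have hVfin : V.index ≠ 0 := Subgroup.index_ne_zero_of_finite
    refine ⟨V, hVo, le_inf hMU le_sup_left, ?_⟩
    have hrmul := Subgroup.relIndex_mul_index (inf_le_left : V ≤ U)
    have hr0 : V.relIndex U ≠ 0 := by
      intro h; rw [h, zero_mul] at hrmul; exact hVfin hrmul.symm
    have hr1 : V.relIndex U ≠ 1 := by
      intro h
      have hle : U ≤ V := Subgroup.relIndex_eq_one.mp h
      exact hxN (hle hxU).2
    have h2 : 2 ≤ V.relIndex U := by omega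
    calc ℓ + 1 ≤ 2 * U.index := by omega
      _ ≤ V.relIndex U * U.index := Nat.mul_le_mul_right _ h2
      _ = V.index := hrmul

/-- A closed subgroup `M` of infinite index in a profinite group `F` is sparse if for every `n`
there is an open subgroup `K ≥ M` all of whose proper open subgroups containing `M` have index
at least `n` in `K`. -/
def IsSparse {F : Type*} [Group F] [TopologicalSpace F] (M : Subgroup F) : Prop :=
  ∀ n : ℕ, ∃ K : Subgroup F, IsOpen (K : Set F) ∧ M ≤ K ∧
    ∀ L : Subgroup F, IsOpen (L : Set F) → M ≤ L → L ≤ K → L ≠ K → n ≤ L.relIndex K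

/-- If `M` is a sparse closed subgroup (of infinite index) of a profinite group `F`, then for all
`ℓ, n` there is an open subgroup `K ≥ M` of index at least `ℓ` in `F` such that every proper
open subgroup `L` of `K` containing `M` satisfies `(K : L) ≥ n`. -/
theorem stmt_17 {F : Type*} [Group F] [TopologicalSpace F] [IsTopologicalGroup F]
    [CompactSpace F] [TotallyDisconnectedSpace F] [T2Space F]
    (M : Subgroup F) (hclosed : IsClosed (M : Set F)) (hinf : M.index = 0)
    (hsparse : IsSparse M) :
    ∀ ℓ n : ℕ, ∃ K : Subgroup F, IsOpen (K : Set F) ∧ M ≤ K ∧ ℓ ≤ K.index ∧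
      ∀ L : Subgroup F, IsOpen (L : Set F) → M ≤ L → L ≤ K → L ≠ K → n ≤ L.relIndex K := by
  intro ℓ n
  obtain ⟨U, hUo, hMU, hU⟩ := exists_open_big M hclosed hinf (max ℓ 1)
  set t := U.index with ht
  have ht1 : 1 ≤ t := le_trans (le_max_right ℓ 1) hU
  obtain ⟨K, hKo, hMK, hK⟩ := hsparse (n * t)
  haveI : Finite (F ⧸ K) := K.quotient_finite_of_isOpen hKo
  have hKfin : K.index ≠ 0 := Subgroup.index_ne_zero_of_finite
  refine ⟨K ⊓ U, hKo.inter hUo, le_inf hMK hMU, ?_, ?_⟩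
  · -- ℓ ≤ (K ⊓ U).index
    have hVo : IsOpen ((K ⊓ U : Subgroup F) : Set F) := hKo.inter hUo
    haveI : Finite (F ⧸ (K ⊓ U : Subgroup F)) := (K ⊓ U).quotient_finite_of_isOpen hVo
    have hVfin : (K ⊓ U).index ≠ 0 := Subgroup.index_ne_zero_of_finite
    have hdvd : U.index ∣ (K ⊓ U).index := Subgroup.index_dvd_of_le inf_le_right
    calc ℓ ≤ t := le_trans (le_max_left ℓ 1) hU
      _ ≤ (K ⊓ U).index := Nat.le_of_dvd (Nat.pos_of_ne_zero hVfin) hdvd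
  · intro L hLo hML hLV hLne
    have hVK : K ⊓ U ≤ K := inf_le_left
    have hLK : L ≤ K := le_trans hLV hVK
    have hLneK : L ≠ K := by
      rintro rfl
      exact hLne (le_antisymm hLV hVK)
    have hbig : n * t ≤ L.relIndex K := hK L hLo hML hLK hLneK
    have hmul : L.relIndex (K ⊓ U) * (K ⊓ U).relIndex K = L.relIndex K :=
      Subgroup.relIndex_mul_relIndex L (K ⊓ U) K hLV hVK
    -- bound b := (K ⊓ U).relIndex K ≤ t
    have hb : (K ⊓ U).relIndex K ≤ t := by
      have h1 : (K ⊓ U).relIndex K * K.index = (K ⊓ U).index :=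
        Subgroup.relIndex_mul_index hVK
      have h2 : (K ⊓ U).index ≤ K.index * U.index := Subgroup.index_inf_le
      have h3 : (K ⊓ U).relIndex K * K.index ≤ t * K.index := by
        rw [h1]; rw [mul_comm t K.index]; exact h2
      exact Nat.le_of_mul_le_mul_right h3 (Nat.pos_of_ne_zero hKfin)
    -- conclude
    have h4 : n * t ≤ L.relIndex (K ⊓ U) * t := by
      calc n * t ≤ L.relIndex K := hbig
        _ = L.relIndex (K ⊓ U) * (K ⊓ U).relIndex K := hmul.symm
        _ ≤ L.relIndex (K ⊓ U) * t := Nat.mul_le_mul_left _ hb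
    exact Nat.le_of_mul_le_mul_right h4 (Nat.lt_of_lt_of_le Nat.zero_lt_one ht1)
end
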